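/- arXiv:1411.7645 — 4 statements merged into one kernel-verified Lean document; each statement's English description precedes it below -/
import Mathlib

section
/- Any two countable VO_n-structures are isomorphic. More precisely, if M = (M₀, M₁, …, Mₙ) and N = (N₀, N₁, …, Nₙ) are VO_n-structures in which every sort M₀, …, Mₙ, N₀, …, Nₙ is countable, then there exists an isomorphism of VO_n-structures from M to N. -/
universe u

/-- A `VO n`-structure (for `n ≥ 1`): a sort `M0` with a distinguished element `0`, sorts
`M i` (`i ∈ {1,…,n}`, here indexed by `Fin n`) each carrying a dense linear order without
endpoints, and injective maps `f i : M0 → M i` whose images are dense and codense in `M i`,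
such that any system of nonempty open intervals (one in each sort `M i`) can be
simultaneously hit by the image of a single point of `M0`. -/
structure VO (n : ℕ) (M0 : Type u) (M : Fin n → Type u) [∀ i, LinearOrder (M i)] where
  /-- the distinguished element `0` of the sort `M0` -/
  zero : M0
  /-- the maps `fᵢ : M₀ → Mᵢ` -/
  f : ∀ i, M0 → M i
  f_inj : ∀ i, Function.Injective (f i)
  /-- each `<ᵢ` is a dense order -/
  lt_dense : ∀ (i) (a b : M i), a < b → ∃ c, a < c ∧ c < b
  /-- no greatest element -/
  no_top : ∀ (i) (a : M i), ∃ b, a < b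
  /-- no least element -/
  no_bot : ∀ (i) (a : M i), ∃ b, b < a
  /-- `fᵢ(M₀)` is `<ᵢ`-dense in `Mᵢ` -/
  image_dense : ∀ (i) (a b : M i), a < b → ∃ x : M0, a < f i x ∧ f i x < b
  /-- `fᵢ(M₀)` is `<ᵢ`-codense in `Mᵢ` -/
  image_codense : ∀ (i) (a b : M i), a < b → ∃ y : M i, a < y ∧ y < b ∧ y ∉ Set.range (f i)
  /-- simultaneous density: axiom 5 of `VO_n` -/
  sim_dense : ∀ a b : (∀ i, M i), (∀ i, a i < b i) →
    ∃ x : M0, ∀ i, a i < f i x ∧ f i x < b i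

variable {n : ℕ} {M0 : Type u} {M : Fin n → Type u} [∀ i, LinearOrder (M i)]

open Classical in
/-- The map `gᵢ : Mᵢ → M₀`, the inverse of `fᵢ` on its image and `0` elsewhere. -/
noncomputable def VO.g (V : VO n M0 M) (i : Fin n) (y : M i) : M0 :=
  if h : ∃ x, V.f i x = y then h.choose else V.zero

/-- The substructure `⟨A⟩` generated by a subset `A` of the disjoint union of the sorts:
the smallest subset containing `A ∪ {0}` and closed under all the maps `fᵢ` and `gᵢ`. -/
inductive VO.gen (V : VO n M0 M) (A : Set (M0 ⊕ Sigma M)) : (M0 ⊕ Sigma M) → Prop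
  | mem (x : M0 ⊕ Sigma M) (hx : x ∈ A) : VO.gen V A x
  | zero : VO.gen V A (Sum.inl V.zero)
  | fcl (i : Fin n) (x : M0) (hx : VO.gen V A (Sum.inl x)) :
      VO.gen V A (Sum.inr ⟨i, V.f i x⟩)
  | gcl (i : Fin n) (y : M i) (hy : VO.gen V A (Sum.inr ⟨i, y⟩)) :
      VO.gen V A (Sum.inl (V.g i y))

/-- `I` is an open interval of the linear order `α` (allowing `±∞` as endpoints). -/
def IsOpenInterval {α : Type*} [LinearOrder α] (I : Set α) : Prop :=
  (∃ a b : α, I = Set.Ioo a b) ∨ (∃ a : α, I = Set.Ioi a) ∨ (∃ b : α, I = Set.Iio b) ∨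
    I = Set.univ

/-- `I` is an open interval of `α` all of whose finite endpoints lie in `S`. -/
def EndpointsIn {α : Type*} [LinearOrder α] (I : Set α) (S : Set α) : Prop :=
  (∃ a ∈ S, ∃ b ∈ S, I = Set.Ioo a b) ∨ (∃ a ∈ S, I = Set.Ioi a) ∨ (∃ b ∈ S, I = Set.Iio b) ∨
    I = Set.univ

/-- A multi-interval: a subset of `M₀` of the form `⋂ i, fᵢ⁻¹(Iⁱ)` where each `Iⁱ` is a
nonempty open interval of `Mᵢ`. -/
def VO.IsMultiInterval (V : VO n M0 M) (S : Set M0) : Prop :=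
  ∃ I : ∀ i, Set (M i), (∀ i, IsOpenInterval (I i) ∧ (I i).Nonempty) ∧
    S = ⋂ i, V.f i ⁻¹' I i

/-- `E ⊆ M₀` is multi-open: every point of `E` lies in a multi-interval contained in `E`. -/
def VO.MultiOpen (V : VO n M0 M) (E : Set M0) : Prop :=
  ∀ e ∈ E, ∃ S : Set M0, V.IsMultiInterval S ∧ e ∈ S ∧ S ⊆ E

/-- `I` is the maximal multi-interval in `E` containing `e`, recorded componentwise:
`e ∈ ⋂ i, fᵢ⁻¹(I i) ⊆ E`, each `I i` is an open interval, and for each sort `m`, `I m` is the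
largest open interval `X` with `fₘ(e) ∈ X` for which there exist open intervals `J j` (`j > m`)
containing `f j e` with `⋂_{l<m} fₗ⁻¹(I l) ∩ fₘ⁻¹(X) ∩ ⋂_{j>m} fⱼ⁻¹(J j) ⊆ E`. -/
def VO.IsMaxMultiInterval (V : VO n M0 M) (E : Set M0) (e : M0) (I : ∀ i, Set (M i)) : Prop :=
  (∀ i, IsOpenInterval (I i)) ∧ (∀ i, V.f i e ∈ I i) ∧ (⋂ i, V.f i ⁻¹' I i) ⊆ E ∧
  ∀ (m : Fin n) (X : Set (M m)), IsOpenInterval X → V.f m e ∈ X →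
    (∃ J : ∀ j, Set (M j),
      (∀ j, m < j → IsOpenInterval (J j) ∧ V.f j e ∈ J j) ∧
      ((⋂ l, ⋂ _ : l < m, V.f l ⁻¹' I l) ∩ V.f m ⁻¹' X ∩
        ⋂ j, ⋂ _ : m < j, V.f j ⁻¹' J j) ⊆ E) →
    X ⊆ I m



section BF
variable {n : ℕ} {M0 : Type u} {M : Fin n → Type u} [∀ i, LinearOrder (M i)]
variable {N0 : Type u} {N : Fin n → Type u} [∀ i, LinearOrder (N i)]

private lemma exists_bounds {α β : Type*} [LinearOrder α] [LinearOrder β] [Nonempty β]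
    (ht' : ∀ x : β, ∃ y, x < y) (hb' : ∀ x : β, ∃ y, y < x)
    (t : Set (α × β)) (ht : t.Finite)
    (hord : ∀ p ∈ t, ∀ q ∈ t, p.1 < q.1 → p.2 < q.2)
    (a : α) :
    ∃ c d : β, c < d ∧ (∀ p ∈ t, p.1 < a → p.2 ≤ c) ∧ (∀ p ∈ t, a < p.1 → d ≤ p.2) := by
  set A : Set (α × β) := {p ∈ t | p.1 < a} with hA
  set B : Set (α × β) := {p ∈ t | a < p.1} with hB
  have hAfin : A.Finite := ht.subset (Set.sep_subset _ _)
  have hBfin : B.Finite := ht.subset (Set.sep_subset _ _)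
  rcases A.eq_empty_or_nonempty with hAe | hAne
  · rcases B.eq_empty_or_nonempty with hBe | hBne
    · obtain ⟨c⟩ := ‹Nonempty β›
      obtain ⟨d, hd⟩ := ht' c
      refine ⟨c, d, hd, ?_, ?_⟩
      · intro p hp hpa; exact absurd (show p ∈ A from ⟨hp, hpa⟩) (by simp [hAe])
      · intro p hp hpa; exact absurd (show p ∈ B from ⟨hp, hpa⟩) (by simp [hBe])
    · obtain ⟨q0, hq0, hq0min⟩ := Set.exists_min_image B (fun p => p.2) hBfin hBne
      obtain ⟨c, hc⟩ := hb' q0.2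
      refine ⟨c, q0.2, hc, ?_, ?_⟩
      · intro p hp hpa; exact absurd (show p ∈ A from ⟨hp, hpa⟩) (by simp [hAe])
      · intro p hp hpa; exact hq0min p ⟨hp, hpa⟩
  · obtain ⟨p0, hp0, hp0max⟩ := Set.exists_max_image A (fun p => p.2) hAfin hAne
    rcases B.eq_empty_or_nonempty with hBe | hBne
    · obtain ⟨d, hd⟩ := ht' p0.2
      refine ⟨p0.2, d, hd, fun p hp hpa => hp0max p ⟨hp, hpa⟩, ?_⟩
      intro p hp hpa; exact absurd (show p ∈ B from ⟨hp, hpa⟩) (by simp [hBe])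
    · obtain ⟨q0, hq0, hq0min⟩ := Set.exists_min_image B (fun p => p.2) hBfin hBne
      refine ⟨p0.2, q0.2, ?_, fun p hp hpa => hp0max p ⟨hp, hpa⟩,
        fun p hp hpa => hq0min p ⟨hp, hpa⟩⟩
      exact hord p0 hp0.1 q0 hq0.1 (lt_trans hp0.2 hq0.2)

/-- A finite partial isomorphism between two `VO`-structures. -/
structure PIso (V : VO n M0 M) (W : VO n N0 N) : Type u where
  s : Set (M0 × N0)
  t : ∀ i, Set (M i × N i)
  s_fin : s.Finite
  t_fin : ∀ i, (t i).Finite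
  zero_mem : (V.zero, W.zero) ∈ s
  s_inj : ∀ p ∈ s, ∀ q ∈ s, p.1 = q.1 ↔ p.2 = q.2
  t_ord : ∀ i, ∀ p ∈ t i, ∀ q ∈ t i, p.1 < q.1 ↔ p.2 < q.2
  compat : ∀ p ∈ s, ∀ i, (V.f i p.1, W.f i p.2) ∈ t i
  pure_l : ∀ i, ∀ p ∈ t i, ∀ x, V.f i x = p.1 → ∃ y, (x, y) ∈ s
  pure_r : ∀ i, ∀ p ∈ t i, ∀ y, W.f i y = p.2 → ∃ x, (x, y) ∈ s

namespace PIso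

variable {V : VO n M0 M} {W : VO n N0 N}

lemma t_fun (p : PIso V W) (i : Fin n) {q r : M i × N i} (hq : q ∈ p.t i) (hr : r ∈ p.t i) :
    q.1 = r.1 ↔ q.2 = r.2 := by
  constructor
  · intro h
    have h1 := p.t_ord i q hq r hr
    have h2 := p.t_ord i r hr q hq
    exact le_antisymm (by rw [← not_lt]; intro hc; exact absurd (h2.mpr hc) (by simp [h]))
      (by rw [← not_lt]; intro hc; exact absurd (h1.mpr hc) (by simp [h]))
  · intro h
    have h1 := p.t_ord i q hq r hr
    have h2 := p.t_ord i r hr q hq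
    exact le_antisymm (by rw [← not_lt]; intro hc; exact absurd (h2.mp hc) (by simp [h]))
      (by rw [← not_lt]; intro hc; exact absurd (h1.mp hc) (by simp [h]))

/-- The flipped partial isomorphism. -/
def flip (p : PIso V W) : PIso W V where
  s := Prod.swap ⁻¹' p.s
  t := fun i => Prod.swap ⁻¹' p.t i
  s_fin := p.s_fin.preimage (Function.Injective.injOn Prod.swap_injective)
  t_fin := fun i => (p.t_fin i).preimage (Function.Injective.injOn Prod.swap_injective)
  zero_mem := p.zero_mem
  s_inj := fun q hq r hr => (p.s_inj _ hq _ hr).symm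
  t_ord := fun i q hq r hr => (p.t_ord i _ hq _ hr).symm
  compat := fun q hq i => p.compat _ hq i
  pure_l := fun i q hq x hx => p.pure_r i _ hq x hx
  pure_r := fun i q hq y hy => p.pure_l i _ hq y hy

/-- Extension order on partial isomorphisms. -/
def le (p q : PIso V W) : Prop := p.s ⊆ q.s ∧ ∀ i, p.t i ⊆ q.t i

lemma le_refl (p : PIso V W) : p.le p := ⟨subset_rfl, fun _ => subset_rfl⟩

lemma le_trans {p q r : PIso V W} (h1 : p.le q) (h2 : q.le r) : p.le r :=
  ⟨h1.1.trans h2.1, fun i => (h1.2 i).trans (h2.2 i)⟩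

lemma flip_le_flip {p q : PIso V W} (h : p.le q) : p.flip.le q.flip :=
  ⟨fun x hx => h.1 hx, fun i x hx => h.2 i hx⟩

end PIso

namespace PIso

variable {V : VO n M0 M} {W : VO n N0 N}

/-- The base partial isomorphism. -/
def base (V : VO n M0 M) (W : VO n N0 N) : PIso V W where
  s := {(V.zero, W.zero)}
  t := fun i => {(V.f i V.zero, W.f i W.zero)}
  s_fin := Set.finite_singleton _
  t_fin := fun _ => Set.finite_singleton _
  zero_mem := rfl
  s_inj := by
    intro q hq r hr
    rw [Set.mem_singleton_iff] at hq hr; subst hq; subst hr; simp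
  t_ord := by
    intro i q hq r hr
    rw [Set.mem_singleton_iff] at hq hr; subst hq; subst hr; simp
  compat := by
    intro q hq i
    rw [Set.mem_singleton_iff] at hq; subst hq; rfl
  pure_l := by
    intro i q hq x hx
    rw [Set.mem_singleton_iff] at hq; subst hq
    have : x = V.zero := V.f_inj i hx
    exact ⟨W.zero, by rw [this]; rfl⟩
  pure_r := by
    intro i q hq y hy
    rw [Set.mem_singleton_iff] at hq; subst hq
    have : y = W.zero := W.f_inj i hy
    exact ⟨V.zero, by rw [this]; rfl⟩

lemma ext_left0 (hn : 1 ≤ n) (p : PIso V W) (x0 : M0) :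
    ∃ q : PIso V W, p.le q ∧ ∃ y, (x0, y) ∈ q.s := by
  by_cases hx : ∃ y, (x0, y) ∈ p.s
  · exact ⟨p, p.le_refl, hx⟩
  push_neg at hx
  have hnd : ∀ i, ∀ q ∈ p.t i, q.1 ≠ V.f i x0 := by
    intro i q hq hc
    obtain ⟨y, hy⟩ := p.pure_l i q hq x0 hc.symm
    exact hx y hy
  have hbounds : ∀ i : Fin n, ∃ c d : N i, c < d ∧
      (∀ q ∈ p.t i, q.1 < V.f i x0 → q.2 ≤ c) ∧
      (∀ q ∈ p.t i, V.f i x0 < q.1 → d ≤ q.2) := by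
    intro i
    haveI : Nonempty (N i) := ⟨W.f i W.zero⟩
    exact exists_bounds (W.no_top i) (W.no_bot i) (p.t i) (p.t_fin i)
      (fun q hq r hr h => (p.t_ord i q hq r hr).mp h) (V.f i x0)
  choose c d hcd hlow hhigh using hbounds
  obtain ⟨y0, hy0⟩ := W.sim_dense c d hcd
  have key : ∀ i, ∀ q ∈ p.t i, (q.1 < V.f i x0 ↔ q.2 < W.f i y0) ∧
      (V.f i x0 < q.1 ↔ W.f i y0 < q.2) := by
    intro i q hq
    have h1 : q.1 < V.f i x0 → q.2 < W.f i y0 :=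
      fun h => lt_of_le_of_lt (hlow i q hq h) (hy0 i).1
    have h2 : V.f i x0 < q.1 → W.f i y0 < q.2 :=
      fun h => lt_of_lt_of_le (hy0 i).2 (hhigh i q hq h)
    have hne := hnd i q hq
    constructor
    · refine ⟨h1, fun h => ?_⟩
      rcases lt_trichotomy q.1 (V.f i x0) with h' | h' | h'
      · exact h'
      · exact absurd h' hne
      · exact absurd h (asymm (h2 h'))
    · refine ⟨h2, fun h => ?_⟩
      rcases lt_trichotomy q.1 (V.f i x0) with h' | h' | h'
      · exact absurd h (asymm (h1 h'))
      · exact absurd h' hne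
      · exact h'
  have hsnd : ∀ i, ∀ q ∈ p.t i, q.2 ≠ W.f i y0 := by
    intro i q hq hc
    rcases lt_trichotomy q.1 (V.f i x0) with h' | h' | h'
    · exact absurd ((key i q hq).1.mp h') (by simp [hc])
    · exact hnd i q hq h'
    · exact absurd ((key i q hq).2.mp h') (by simp [hc])
  have hy0r : ∀ x, (x, y0) ∉ p.s := by
    intro x hxs
    exact hsnd ⟨0, hn⟩ _ (p.compat _ hxs ⟨0, hn⟩) rfl
  refine ⟨⟨insert (x0, y0) p.s, fun i => insert (V.f i x0, W.f i y0) (p.t i),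
    p.s_fin.insert _, fun i => (p.t_fin i).insert _,
    Set.mem_insert_of_mem _ p.zero_mem, ?_, ?_, ?_, ?_, ?_⟩,
    ⟨Set.subset_insert _ _, fun _ => Set.subset_insert _ _⟩,
    y0, Set.mem_insert _ _⟩
  · -- s_inj
    intro q hq r hr
    rw [Set.mem_insert_iff] at hq hr
    rcases hq with rfl | hq <;> rcases hr with rfl | hr
    · simp
    · exact iff_of_false
        (fun h => hx r.2 (by rw [show x0 = r.1 from h, Prod.mk.eta]; exact hr))
        (fun h => hy0r r.1 (by rw [show y0 = r.2 from h, Prod.mk.eta]; exact hr))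
    · exact iff_of_false
        (fun h => hx q.2 (by rw [← show q.1 = x0 from h, Prod.mk.eta]; exact hq))
        (fun h => hy0r q.1 (by rw [← show q.2 = y0 from h, Prod.mk.eta]; exact hq))
    · exact p.s_inj q hq r hr
  · -- t_ord
    intro i q hq r hr
    rw [Set.mem_insert_iff] at hq hr
    rcases hq with rfl | hq <;> rcases hr with rfl | hr
    · simp
    · exact (key i r hr).2
    · exact (key i q hq).1
    · exact p.t_ord i q hq r hr
  · -- compat
    intro q hq i
    rw [Set.mem_insert_iff] at hq
    rcases hq with rfl | hq
    · exact Set.mem_insert _ _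
    · exact Set.mem_insert_of_mem _ (p.compat q hq i)
  · -- pure_l
    intro i q hq x hxq
    rw [Set.mem_insert_iff] at hq
    rcases hq with rfl | hq
    · have : x = x0 := V.f_inj i hxq
      exact ⟨y0, by rw [this]; exact Set.mem_insert _ _⟩
    · obtain ⟨y, hy⟩ := p.pure_l i q hq x hxq
      exact ⟨y, Set.mem_insert_of_mem _ hy⟩
  · -- pure_r
    intro i q hq y hyq
    rw [Set.mem_insert_iff] at hq
    rcases hq with rfl | hq
    · have : y = y0 := W.f_inj i hyq
      exact ⟨x0, by rw [this]; exact Set.mem_insert _ _⟩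
    · obtain ⟨x, hxm⟩ := p.pure_r i q hq y hyq
      exact ⟨x, Set.mem_insert_of_mem _ hxm⟩

lemma ext_left_t (hn : 1 ≤ n) (p : PIso V W) (i0 : Fin n) (a : M i0) :
    ∃ q : PIso V W, p.le q ∧ ∃ b, (a, b) ∈ q.t i0 := by
  classical
  by_cases hra : ∃ x, V.f i0 x = a
  · obtain ⟨x, rfl⟩ := hra
    obtain ⟨q, hpq, y, hy⟩ := ext_left0 hn p x
    exact ⟨q, hpq, W.f i0 y, q.compat (x, y) hy i0⟩
  by_cases hd : ∃ b, (a, b) ∈ p.t i0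
  · exact ⟨p, p.le_refl, hd⟩
  push_neg at hd
  have hnd : ∀ q ∈ p.t i0, q.1 ≠ a := by
    intro q hq hc
    exact hd q.2 (by rw [← hc, Prod.mk.eta]; exact hq)
  haveI : Nonempty (N i0) := ⟨W.f i0 W.zero⟩
  obtain ⟨c, d, hcd, hlow, hhigh⟩ := exists_bounds (W.no_top i0) (W.no_bot i0) (p.t i0)
    (p.t_fin i0) (fun q hq r hr h => (p.t_ord i0 q hq r hr).mp h) a
  obtain ⟨z, hcz, hzd, hznr⟩ := W.image_codense i0 c d hcd
  have key : ∀ q ∈ p.t i0, (q.1 < a ↔ q.2 < z) ∧ (a < q.1 ↔ z < q.2) := by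
    intro q hq
    have h1 : q.1 < a → q.2 < z := fun h => lt_of_le_of_lt (hlow q hq h) hcz
    have h2 : a < q.1 → z < q.2 := fun h => lt_of_lt_of_le hzd (hhigh q hq h)
    have hne := hnd q hq
    constructor
    · refine ⟨h1, fun h => ?_⟩
      rcases lt_trichotomy q.1 a with h' | h' | h'
      · exact h'
      · exact absurd h' hne
      · exact absurd h (asymm (h2 h'))
    · refine ⟨h2, fun h => ?_⟩
      rcases lt_trichotomy q.1 a with h' | h' | h'
      · exact absurd h (asymm (h1 h'))
      · exact absurd h' hne
      · exact h'
  refine ⟨⟨p.s, Function.update p.t i0 (insert (a, z) (p.t i0)), p.s_fin, ?_,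
    p.zero_mem, p.s_inj, ?_, ?_, ?_, ?_⟩, ⟨subset_rfl, ?_⟩, z, ?_⟩
  · -- t_fin
    intro i
    by_cases h : i = i0
    · subst h; rw [Function.update_self]; exact (p.t_fin i).insert _
    · rw [Function.update_of_ne h]; exact p.t_fin i
  · -- t_ord
    intro i q hq r hr
    by_cases h : i = i0
    · subst h
      rw [Function.update_self, Set.mem_insert_iff] at hq hr
      rcases hq with rfl | hq <;> rcases hr with rfl | hr
      · simp
      · exact (key r hr).2
      · exact (key q hq).1
      · exact p.t_ord i q hq r hr
    · rw [Function.update_of_ne h] at hq hr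
      exact p.t_ord i q hq r hr
  · -- compat
    intro q hq i
    by_cases h : i = i0
    · subst h
      rw [Function.update_self]
      exact Set.mem_insert_of_mem _ (p.compat q hq i)
    · rw [Function.update_of_ne h]
      exact p.compat q hq i
  · -- pure_l
    intro i q hq x hxq
    by_cases h : i = i0
    · subst h
      rw [Function.update_self, Set.mem_insert_iff] at hq
      rcases hq with rfl | hq
      · exact absurd ⟨x, hxq⟩ hra
      · exact p.pure_l i q hq x hxq
    · rw [Function.update_of_ne h] at hq
      exact p.pure_l i q hq x hxq
  · -- pure_r
    intro i q hq y hyq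
    by_cases h : i = i0
    · subst h
      rw [Function.update_self, Set.mem_insert_iff] at hq
      rcases hq with rfl | hq
      · exact absurd ⟨y, hyq⟩ hznr
      · exact p.pure_r i q hq y hyq
    · rw [Function.update_of_ne h] at hq
      exact p.pure_r i q hq y hyq
  · -- le on t
    intro i
    show p.t i ⊆ Function.update p.t i0 (insert (a, z) (p.t i0)) i
    by_cases h : i = i0
    · subst h; rw [Function.update_self]; exact Set.subset_insert _ _
    · rw [Function.update_of_ne h]
  · -- membership
    show (a, z) ∈ Function.update p.t i0 (insert (a, z) (p.t i0)) i0
    rw [Function.update_self]; exact Set.mem_insert _ _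

lemma ext_right0 (hn : 1 ≤ n) (p : PIso V W) (y0 : N0) :
    ∃ q : PIso V W, p.le q ∧ ∃ x, (x, y0) ∈ q.s := by
  obtain ⟨q', h1, x, hx⟩ := ext_left0 hn p.flip y0
  refine ⟨q'.flip, ⟨fun r hr => ?_, fun i r hr => ?_⟩, x, hx⟩
  · exact h1.1 (show r.swap ∈ p.flip.s from hr)
  · exact h1.2 i (show r.swap ∈ p.flip.t i from hr)

lemma ext_right_t (hn : 1 ≤ n) (p : PIso V W) (i0 : Fin n) (b : N i0) :
    ∃ q : PIso V W, p.le q ∧ ∃ a, (a, b) ∈ q.t i0 := by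
  obtain ⟨q', h1, a, ha⟩ := ext_left_t hn p.flip i0 b
  refine ⟨q'.flip, ⟨fun r hr => ?_, fun i r hr => ?_⟩, a, ha⟩
  · exact h1.1 (show r.swap ∈ p.flip.s from hr)
  · exact h1.2 i (show r.swap ∈ p.flip.t i from hr)

end PIso

end BF

/-- Any two countable `VO n`-structures (with `n ≥ 1`) are isomorphic: there
is a bijection `σ₀` between the `0`-th sorts sending `0` to `0`, and order isomorphisms `σᵢ`
between the `i`-th sorts, commuting with the maps `fᵢ`. -/
theorem VO.countable_categorical {n : ℕ} (hn : 1 ≤ n)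
    {M0 : Type u} {M : Fin n → Type u} [∀ i, LinearOrder (M i)]
    {N0 : Type u} {N : Fin n → Type u} [∀ i, LinearOrder (N i)]
    [Countable M0] [∀ i, Countable (M i)] [Countable N0] [∀ i, Countable (N i)]
    (V : VO n M0 M) (W : VO n N0 N) :
    ∃ (σ0 : M0 ≃ N0) (σ : ∀ i, M i ≃o N i),
      σ0 V.zero = W.zero ∧ ∀ (i : Fin n) (x : M0), σ i (V.f i x) = W.f i (σ0 x) := by
  classical
  haveI : Nonempty ((M0 ⊕ (Σ i, M i)) ⊕ (N0 ⊕ (Σ i, N i))) := ⟨Sum.inl (Sum.inl V.zero)⟩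
  obtain ⟨e, he⟩ := exists_surjective_nat ((M0 ⊕ (Σ i, M i)) ⊕ (N0 ⊕ (Σ i, N i)))
  have step : ∀ (p : PIso V W) (q : (M0 ⊕ (Σ i, M i)) ⊕ (N0 ⊕ (Σ i, N i))),
      ∃ p' : PIso V W, p.le p' ∧
      (match q with
       | Sum.inl (Sum.inl x) => ∃ y, (x, y) ∈ p'.s
       | Sum.inl (Sum.inr ⟨i, a⟩) => ∃ b, (a, b) ∈ p'.t i
       | Sum.inr (Sum.inl y) => ∃ x, (x, y) ∈ p'.s
       | Sum.inr (Sum.inr ⟨i, b⟩) => ∃ a, (a, b) ∈ p'.t i) := by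
    intro p q
    match q with
    | Sum.inl (Sum.inl x) => exact PIso.ext_left0 hn p x
    | Sum.inl (Sum.inr ⟨i, a⟩) => exact PIso.ext_left_t hn p i a
    | Sum.inr (Sum.inl y) => exact PIso.ext_right0 hn p y
    | Sum.inr (Sum.inr ⟨i, b⟩) => exact PIso.ext_right_t hn p i b
  choose step' hstep1 hstep2 using step
  let seq : ℕ → PIso V W := fun k => Nat.rec (PIso.base V W) (fun k pk => step' pk (e k)) k
  have hseq_succ : ∀ k, seq (k + 1) = step' (seq k) (e k) := fun _ => rfl
  have hseq : ∀ k, (seq k).le (seq (k + 1)) := fun k => hstep1 (seq k) (e k)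
  have hmono : ∀ k l, k ≤ l → (seq k).le (seq l) := by
    intro k l h
    induction h with
    | refl => exact PIso.le_refl _
    | step _ ih => exact PIso.le_trans ih (hseq _)
  set S : Set (M0 × N0) := ⋃ k, (seq k).s with hS
  set T : ∀ i, Set (M i × N i) := fun i => ⋃ k, (seq k).t i with hT
  have hSpair : ∀ q ∈ S, ∀ r ∈ S, ∃ k, q ∈ (seq k).s ∧ r ∈ (seq k).s := by
    intro q hq r hr
    obtain ⟨k1, hk1⟩ := Set.mem_iUnion.mp hq
    obtain ⟨k2, hk2⟩ := Set.mem_iUnion.mp hr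
    exact ⟨max k1 k2, (hmono k1 _ (le_max_left _ _)).1 hk1,
      (hmono k2 _ (le_max_right _ _)).1 hk2⟩
  have hTpair : ∀ i, ∀ q ∈ T i, ∀ r ∈ T i, ∃ k, q ∈ (seq k).t i ∧ r ∈ (seq k).t i := by
    intro i q hq r hr
    obtain ⟨k1, hk1⟩ := Set.mem_iUnion.mp hq
    obtain ⟨k2, hk2⟩ := Set.mem_iUnion.mp hr
    exact ⟨max k1 k2, (hmono k1 _ (le_max_left _ _)).2 i hk1,
      (hmono k2 _ (le_max_right _ _)).2 i hk2⟩
  have hSinj : ∀ q ∈ S, ∀ r ∈ S, (q.1 = r.1 ↔ q.2 = r.2) := by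
    intro q hq r hr
    obtain ⟨k, h1, h2⟩ := hSpair q hq r hr
    exact (seq k).s_inj q h1 r h2
  have hTord : ∀ i, ∀ q ∈ T i, ∀ r ∈ T i, (q.1 < r.1 ↔ q.2 < r.2) := by
    intro i q hq r hr
    obtain ⟨k, h1, h2⟩ := hTpair i q hq r hr
    exact (seq k).t_ord i q h1 r h2
  have hTfun : ∀ i, ∀ q ∈ T i, ∀ r ∈ T i, (q.1 = r.1 ↔ q.2 = r.2) := by
    intro i q hq r hr
    obtain ⟨k, h1, h2⟩ := hTpair i q hq r hr
    exact (seq k).t_fun i h1 h2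
  -- totality
  have hStot : ∀ x : M0, ∃ y, (x, y) ∈ S := by
    intro x
    obtain ⟨k, hk⟩ := he (Sum.inl (Sum.inl x))
    have h := hstep2 (seq k) (e k)
    rw [hk] at h
    obtain ⟨y, hy⟩ := h
    exact ⟨y, Set.mem_iUnion.mpr ⟨k + 1, by rw [hseq_succ k, hk]; exact hy⟩⟩
  have hSsur : ∀ y : N0, ∃ x, (x, y) ∈ S := by
    intro y
    obtain ⟨k, hk⟩ := he (Sum.inr (Sum.inl y))
    have h := hstep2 (seq k) (e k)
    rw [hk] at h
    obtain ⟨x, hx⟩ := h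
    exact ⟨x, Set.mem_iUnion.mpr ⟨k + 1, by rw [hseq_succ k, hk]; exact hx⟩⟩
  have hTtot : ∀ i, ∀ a : M i, ∃ b, (a, b) ∈ T i := by
    intro i a
    obtain ⟨k, hk⟩ := he (Sum.inl (Sum.inr ⟨i, a⟩))
    have h := hstep2 (seq k) (e k)
    rw [hk] at h
    obtain ⟨b, hb⟩ := h
    exact ⟨b, Set.mem_iUnion.mpr ⟨k + 1, by rw [hseq_succ k, hk]; exact hb⟩⟩
  have hTsur : ∀ i, ∀ b : N i, ∃ a, (a, b) ∈ T i := by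
    intro i b
    obtain ⟨k, hk⟩ := he (Sum.inr (Sum.inr ⟨i, b⟩))
    have h := hstep2 (seq k) (e k)
    rw [hk] at h
    obtain ⟨a, ha⟩ := h
    exact ⟨a, Set.mem_iUnion.mpr ⟨k + 1, by rw [hseq_succ k, hk]; exact ha⟩⟩
  -- the maps
  let σ0f : M0 → N0 := fun x => (hStot x).choose
  have hσ0f : ∀ x, (x, σ0f x) ∈ S := fun x => (hStot x).choose_spec
  let σf : ∀ i, M i → N i := fun i a => (hTtot i a).choose
  have hσf : ∀ i a, (a, σf i a) ∈ T i := fun i a => (hTtot i a).choose_spec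
  have hσ0inj : Function.Injective σ0f := by
    intro x x' h
    exact ((hSinj (x, σ0f x) (hσ0f x) (x', σ0f x') (hσ0f x')).mpr h :)
  have hσ0sur : Function.Surjective σ0f := by
    intro y
    obtain ⟨x, hx⟩ := hSsur y
    exact ⟨x, (hSinj (x, σ0f x) (hσ0f x) (x, y) hx).mp rfl⟩
  have hσmono : ∀ i, StrictMono (σf i) := by
    intro i a a' h
    exact (hTord i (a, σf i a) (hσf i a) (a', σf i a') (hσf i a')).mp h
  have hσsur : ∀ i, Function.Surjective (σf i) := by
    intro i b
    obtain ⟨a, ha⟩ := hTsur i b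
    exact ⟨a, (hTfun i (a, σf i a) (hσf i a) (a, b) ha).mp rfl⟩
  refine ⟨Equiv.ofBijective σ0f ⟨hσ0inj, hσ0sur⟩,
    fun i => StrictMono.orderIsoOfSurjective (σf i) (hσmono i) (hσsur i), ?_, ?_⟩
  · show σ0f V.zero = W.zero
    have h0 : (V.zero, W.zero) ∈ S := Set.mem_iUnion.mpr ⟨0, (seq 0).zero_mem⟩
    exact (hSinj (V.zero, σ0f V.zero) (hσ0f V.zero) (V.zero, W.zero) h0).mp rfl
  · intro i x
    show σf i (V.f i x) = W.f i (σ0f x)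
    obtain ⟨k, hk⟩ := Set.mem_iUnion.mp (hσ0f x)
    have hc : (V.f i x, W.f i (σ0f x)) ∈ T i :=
      Set.mem_iUnion.mpr ⟨k, (seq k).compat (x, σ0f x) hk i⟩
    exact (hTfun i (V.f i x, σf i (V.f i x)) (hσf i (V.f i x))
      (V.f i x, W.f i (σ0f x)) hc).mp rfl
end

section
/- Finite partial isomorphisms between VO_n-structures extend one element at a time: let M and N be VO_n-structures, let A be a finite subset of the disjoint union of the sorts of M with A = ⟨A⟩, and let h be an injective sort-preserving map from A into the disjoint union of the sorts of N such that h(0) = 0, h preserves each order <ᵢ, h ∘ fᵢ = fᵢᴺ ∘ h and h ∘ gᵢ = gᵢᴺ ∘ h on the appropriate sorts, and h(A) = ⟨h(A)⟩. Then for every element b of any sort of M there exists a map h′ with the same properties, defined on ⟨A ∪ {b}⟩, extending h. -/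
universe u

variable {n : ℕ} {M0 : Type u} {M : Fin n → Type u} [∀ i, LinearOrder (M i)]

/-- The sort-preserving map on the disjoint unions of the sorts induced by
`h0 : M0 → N0` and `h i : M i → N i`. -/
def sortMap {N0 : Type u} {N : Fin n → Type u}
    (h0 : M0 → N0) (h : ∀ i, M i → N i) : (M0 ⊕ Sigma M) → (N0 ⊕ Sigma N) :=
  Sum.map h0 (fun p => ⟨p.1, h p.1 p.2⟩)

/-- `(h0, h)` is a partial isomorphism of `VO n`-structures with domain `A`:
`A = ⟨A⟩`, the induced sort-preserving map is injective on `A`, sends `0` to `0`,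
preserves each order `<ᵢ` on `A`, commutes with the `fᵢ` and `gᵢ` on `A`, and its
image `h(A)` satisfies `h(A) = ⟨h(A)⟩`. -/
def VO.IsPartialIso {N0 : Type u} {N : Fin n → Type u} [∀ i, LinearOrder (N i)]
    (V : VO n M0 M) (W : VO n N0 N) (A : Set (M0 ⊕ Sigma M))
    (h0 : M0 → N0) (h : ∀ i, M i → N i) : Prop :=
  {x | V.gen A x} = A ∧
  Set.InjOn (sortMap h0 h) A ∧
  h0 V.zero = W.zero ∧
  (∀ (i : Fin n) (x y : M i), Sum.inr ⟨i, x⟩ ∈ A → Sum.inr ⟨i, y⟩ ∈ A →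
    (x < y ↔ h i x < h i y)) ∧
  (∀ (i : Fin n) (x : M0), Sum.inl x ∈ A → h i (V.f i x) = W.f i (h0 x)) ∧
  (∀ (i : Fin n) (y : M i), Sum.inr ⟨i, y⟩ ∈ A → h0 (V.g i y) = W.g i (h i y)) ∧
  {z | W.gen (sortMap h0 h '' A) z} = sortMap h0 h '' A

section Helpers

variable {N0 : Type u} {N : Fin n → Type u} [∀ i, LinearOrder (N i)]

lemma VO.g_f (V : VO n M0 M) (i : Fin n) (x : M0) : V.g i (V.f i x) = x := by
  classical
  have hex : ∃ z, V.f i z = V.f i x := ⟨x, rfl⟩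
  have h1 : V.g i (V.f i x) = hex.choose := by
    unfold VO.g
    exact dif_pos hex
  rw [h1]
  exact V.f_inj i hex.choose_spec

lemma VO.g_not_range (V : VO n M0 M) (i : Fin n) {y : M i}
    (hy : y ∉ Set.range (V.f i)) : V.g i y = V.zero := by
  classical
  have hex : ¬ ∃ z, V.f i z = y := by rintro ⟨z, rfl⟩; exact hy ⟨z, rfl⟩
  unfold VO.g
  exact dif_neg hex

lemma VO.gen_mono (V : VO n M0 M) {A B : Set (M0 ⊕ Sigma M)}
    (hAB : ∀ x ∈ A, V.gen B x) : ∀ x, V.gen A x → V.gen B x := by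
  intro x hx
  induction hx with
  | mem x hx => exact hAB x hx
  | zero => exact .zero
  | fcl i x _ ih => exact .fcl i x ih
  | gcl i y _ ih => exact .gcl i y ih

lemma VO.gen_setOf_eq (V : VO n M0 M) (B : Set (M0 ⊕ Sigma M)) :
    {x | V.gen {y | V.gen B y} x} = {y | V.gen B y} :=
  Set.eq_of_subset_of_subset (fun x hx => V.gen_mono (fun _ hy => hy) x hx)
    (fun x hx => .mem x hx)

lemma sortMap_inl {h0 : M0 → N0} {h : ∀ i, M i → N i} (x : M0) :
    sortMap h0 h (Sum.inl x) = Sum.inl (h0 x) := rfl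

lemma sortMap_inr {h0 : M0 → N0} {h : ∀ i, M i → N i} (i : Fin n) (a : M i) :
    sortMap h0 h (Sum.inr ⟨i, a⟩) = Sum.inr ⟨i, h i a⟩ := rfl

lemma inl_mem_sortMap_image {h0 : M0 → N0} {h : ∀ i, M i → N i}
    {A : Set (M0 ⊕ Sigma M)} {u : N0} :
    Sum.inl u ∈ sortMap h0 h '' A ↔ ∃ x, Sum.inl x ∈ A ∧ h0 x = u := by
  constructor
  · rintro ⟨c, hc, hc2⟩
    cases c with
    | inl x => exact ⟨x, hc, Sum.inl.inj hc2⟩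
    | inr p => simp [sortMap] at hc2
  · rintro ⟨x, hx, rfl⟩; exact ⟨Sum.inl x, hx, rfl⟩

lemma inr_mem_sortMap_image {h0 : M0 → N0} {h : ∀ i, M i → N i}
    {A : Set (M0 ⊕ Sigma M)} {i : Fin n} {u : N i} :
    Sum.inr ⟨i, u⟩ ∈ sortMap h0 h '' A ↔ ∃ a : M i, Sum.inr ⟨i, a⟩ ∈ A ∧ h i a = u := by
  constructor
  · rintro ⟨c, hc, hc2⟩
    cases c with
    | inl x => simp [sortMap] at hc2
    | inr p =>
      obtain ⟨j, a⟩ := p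
      simp only [sortMap, Sum.map_inr, Sum.inr.injEq, Sigma.mk.inj_iff] at hc2
      obtain ⟨rfl, h2⟩ := hc2
      exact ⟨a, hc, eq_of_heq h2⟩
  · rintro ⟨a, ha, rfl⟩; exact ⟨Sum.inr ⟨i, a⟩, ha, rfl⟩

/-- Gap bounds: around any point `t`, the finite set `S` (mapped by the order-preserving `φ`)
leaves a gap `(lo, hi)` on the other side. -/
lemma gap_bounds {α β : Type u} [LinearOrder α] [LinearOrder β]
    {S : Set α} (hS : S.Finite) (hne : S.Nonempty)
    (φ : α → β) (hφ : ∀ x ∈ S, ∀ y ∈ S, x < y ↔ φ x < φ y)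
    (t : α)
    (ntop : ∀ b : β, ∃ c, b < c) (nbot : ∀ b : β, ∃ c, c < b) :
    ∃ lo hi : β, lo < hi ∧ (∀ a ∈ S, a < t → φ a ≤ lo) ∧
      (∀ a ∈ S, t < a → hi ≤ φ a) := by
  have hle : ∀ x ∈ S, ∀ y ∈ S, x ≤ y → φ x ≤ φ y := by
    intro x hx y hy hxy
    rcases eq_or_lt_of_le hxy with rfl | hlt
    · exact le_refl _
    · exact ((hφ x hx y hy).1 hlt).le
  set L : Set α := {a ∈ S | a < t} with hLdef
  set U : Set α := {a ∈ S | t < a} with hUdef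
  have hLf : L.Finite := hS.subset (fun a ha => ha.1)
  have hUf : U.Finite := hS.subset (fun a ha => ha.1)
  rcases L.eq_empty_or_nonempty with hL | hL
  · rcases U.eq_empty_or_nonempty with hU | hU
    · obtain ⟨s0, hs0⟩ := hne
      obtain ⟨c, hc⟩ := ntop (φ s0)
      refine ⟨φ s0, c, hc, ?_, ?_⟩
      · intro a ha hat
        exact absurd (show a ∈ L from ⟨ha, hat⟩) (by rw [hL]; exact Set.notMem_empty a)
      · intro a ha hat
        exact absurd (show a ∈ U from ⟨ha, hat⟩) (by rw [hU]; exact Set.notMem_empty a)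
    · obtain ⟨u, hu, humin⟩ := Set.exists_min_image U φ hUf hU
      obtain ⟨c, hc⟩ := nbot (φ u)
      refine ⟨c, φ u, hc, ?_, ?_⟩
      · intro a ha hat
        exact absurd (show a ∈ L from ⟨ha, hat⟩) (by rw [hL]; exact Set.notMem_empty a)
      · intro a ha hat
        exact humin a ⟨ha, hat⟩
  · obtain ⟨m, hm, hmax⟩ := Set.exists_max_image L φ hLf hL
    rcases U.eq_empty_or_nonempty with hU | hU
    · obtain ⟨c, hc⟩ := ntop (φ m)
      refine ⟨φ m, c, hc, ?_, ?_⟩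
      · intro a ha hat
        exact hmax a ⟨ha, hat⟩
      · intro a ha hat
        exact absurd (show a ∈ U from ⟨ha, hat⟩) (by rw [hU]; exact Set.notMem_empty a)
    · obtain ⟨u, hu, humin⟩ := Set.exists_min_image U φ hUf hU
      refine ⟨φ m, φ u, ?_, ?_, ?_⟩
      · exact (hφ m hm.1 u hu.1).1 (lt_trans hm.2 hu.2)
      · intro a ha hat
        exact hmax a ⟨ha, hat⟩
      · intro a ha hat
        exact humin a ⟨ha, hat⟩

/-- Extension by a new point of the sort `M0`. -/
lemma VO.extend_inl {n : ℕ} (hn : 1 ≤ n)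
    {M0 : Type u} {M : Fin n → Type u} [∀ i, LinearOrder (M i)]
    {N0 : Type u} {N : Fin n → Type u} [∀ i, LinearOrder (N i)]
    (V : VO n M0 M) (W : VO n N0 N)
    (A : Set (M0 ⊕ Sigma M)) (hA : A.Finite)
    (h0 : M0 → N0) (h : ∀ i, M i → N i)
    (hiso : V.IsPartialIso W A h0 h) (x₀ : M0) (hx₀ : Sum.inl x₀ ∉ A) :
    ∃ (h0' : M0 → N0) (h' : ∀ i, M i → N i),
      V.IsPartialIso W {x | V.gen (insert (Sum.inl x₀) A) x} h0' h' ∧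
      (∀ x : M0, Sum.inl x ∈ A → h0' x = h0 x) ∧
      (∀ (i : Fin n) (y : M i), Sum.inr ⟨i, y⟩ ∈ A → h' i y = h i y) := by
  classical
  obtain ⟨hclA, hinj, hz, hord, hf, hg, hclB⟩ := hiso
  have memA : ∀ c, V.gen A c → c ∈ A := fun c hc => hclA ▸ hc
  set Aset : ∀ i : Fin n, Set (M i) := fun i => {a | Sum.inr ⟨i, a⟩ ∈ A} with hAsetdef
  have hAsetf : ∀ i, (Aset i).Finite := by
    intro i
    have : Aset i = (fun a : M i => (Sum.inr ⟨i, a⟩ : M0 ⊕ Sigma M)) ⁻¹' A := rfl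
    rw [this]
    apply Set.Finite.preimage _ hA
    intro a _ b _ hab
    simp only [Sum.inr.injEq, Sigma.mk.inj_iff, heq_eq_eq, true_and] at hab
    exact hab
  have hAsetne : ∀ i, V.f i V.zero ∈ Aset i := fun i => memA _ (.fcl i V.zero .zero)
  have ht : ∀ i, V.f i x₀ ∉ Aset i := by
    intro i hmem
    have h1 := memA _ (.gcl i (V.f i x₀) (.mem _ hmem))
    rw [V.g_f] at h1
    exact hx₀ h1
  have key : ∀ i, ∃ lo hi : N i, lo < hi ∧
      (∀ a ∈ Aset i, a < V.f i x₀ → h i a ≤ lo) ∧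
      (∀ a ∈ Aset i, V.f i x₀ < a → hi ≤ h i a) := by
    intro i
    exact gap_bounds (hAsetf i) ⟨_, hAsetne i⟩ (h i)
      (fun x hx y hy => hord i x y hx hy) (V.f i x₀) (W.no_top i) (W.no_bot i)
  choose lo hi hlohi hlow hhigh using key
  obtain ⟨y₀, hy₀⟩ := W.sim_dense lo hi hlohi
  have glt : ∀ i, ∀ a ∈ Aset i, a < V.f i x₀ → h i a < W.f i y₀ :=
    fun i a ha hlt => lt_of_le_of_lt (hlow i a ha hlt) (hy₀ i).1
  have ggt : ∀ i, ∀ a ∈ Aset i, V.f i x₀ < a → W.f i y₀ < h i a :=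
    fun i a ha hlt => lt_of_lt_of_le (hy₀ i).2 (hhigh i a ha hlt)
  have gne : ∀ i, ∀ a ∈ Aset i, h i a ≠ W.f i y₀ := by
    intro i a ha heq
    rcases lt_trichotomy a (V.f i x₀) with hlt | hEq | hgt
    · exact absurd heq (ne_of_lt (glt i a ha hlt))
    · exact ht i (hEq ▸ ha)
    · exact absurd heq.symm (ne_of_lt (ggt i a ha hgt))
  have hy0fresh : ∀ a, Sum.inl a ∈ A → h0 a ≠ y₀ := by
    intro a ha heq
    set i : Fin n := ⟨0, hn⟩
    have h1 : V.f i a ∈ Aset i := memA _ (.fcl i a (.mem _ ha))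
    exact gne i (V.f i a) h1 (by rw [hf i a ha, heq])
  set h0' : M0 → N0 := Function.update h0 x₀ y₀ with h0'def
  set h' : ∀ i, M i → N i :=
    fun j => Function.update (h j) (V.f j x₀) (W.f j y₀) with h'def
  have ag0 : ∀ x, Sum.inl x ∈ A → h0' x = h0 x := by
    intro x hx
    apply Function.update_of_ne
    rintro rfl; exact hx₀ hx
  have agi : ∀ (j : Fin n) (a : M j), Sum.inr ⟨j, a⟩ ∈ A → h' j a = h j a := by
    intro j a ha
    apply Function.update_of_ne
    rintro rfl; exact ht j ha
  have h0'x₀ : h0' x₀ = y₀ := Function.update_self _ _ _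
  have h'fx₀ : ∀ j, h' j (V.f j x₀) = W.f j y₀ := fun j => Function.update_self _ _ _
  have himg : sortMap h0' h' '' A = sortMap h0 h '' A := by
    apply Set.image_congr
    intro c hc
    cases c with
    | inl x => simp only [sortMap_inl, ag0 x hc]
    | inr p =>
      obtain ⟨j, a⟩ := p
      simp only [sortMap_inr, agi j a hc]
  -- description of the new domain
  set D' : Set (M0 ⊕ Sigma M) :=
    insert (Sum.inl x₀) (A ∪ Set.range (fun j : Fin n => (Sum.inr ⟨j, V.f j x₀⟩ : M0 ⊕ Sigma M)))
    with hD'def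
  have hD : {x | V.gen (insert (Sum.inl x₀) A) x} = D' := by
    ext c
    constructor
    · intro hc
      induction hc with
      | mem c hc =>
        rcases hc with rfl | hc
        · exact Set.mem_insert _ _
        · exact Set.mem_insert_of_mem _ (Or.inl hc)
      | zero => exact Set.mem_insert_of_mem _ (Or.inl (memA _ .zero))
      | fcl j x _ ih =>
        rcases ih with hx | hx | hx
        · rw [Sum.inl.inj hx]
          exact Set.mem_insert_of_mem _ (Or.inr ⟨j, rfl⟩)
        · exact Set.mem_insert_of_mem _ (Or.inl (memA _ (.fcl j x (.mem _ hx))))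
        · obtain ⟨j', hj'⟩ := hx
          simp at hj'
      | gcl j y _ ih =>
        rcases ih with hy | hy | hy
        · simp at hy
        · exact Set.mem_insert_of_mem _ (Or.inl (memA _ (.gcl j y (.mem _ hy))))
        · obtain ⟨j', hj'⟩ := hy
          simp only [Sum.inr.injEq, Sigma.mk.inj_iff] at hj'
          obtain ⟨rfl, h2⟩ := hj'
          rw [eq_of_heq h2.symm, V.g_f]
          exact Set.mem_insert _ _
    · intro hc
      rcases hc with rfl | hc | hc
      · exact .mem _ (Set.mem_insert _ _)
      · exact .mem _ (Set.mem_insert_of_mem _ hc)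
      · obtain ⟨j, rfl⟩ := hc
        exact .fcl j x₀ (.mem _ (Set.mem_insert _ _))
  -- membership characterizations
  have memD'inl : ∀ x : M0, Sum.inl x ∈ D' ↔ (x = x₀ ∨ Sum.inl x ∈ A) := by
    intro x
    constructor
    · intro hx
      rcases hx with hx | hx | hx
      · exact Or.inl (Sum.inl.inj hx)
      · exact Or.inr hx
      · obtain ⟨j, hj⟩ := hx; simp at hj
    · rintro (rfl | hx)
      · exact Set.mem_insert _ _
      · exact Set.mem_insert_of_mem _ (Or.inl hx)
  have memD'inr : ∀ (i : Fin n) (a : M i),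
      Sum.inr ⟨i, a⟩ ∈ D' ↔ (a ∈ Aset i ∨ a = V.f i x₀) := by
    intro i a
    constructor
    · intro hx
      rcases hx with hx | hx | hx
      · simp at hx
      · exact Or.inl hx
      · obtain ⟨j, hj⟩ := hx
        simp only [Sum.inr.injEq, Sigma.mk.inj_iff] at hj
        obtain ⟨rfl, h2⟩ := hj
        exact Or.inr (eq_of_heq h2).symm
    · rintro (ha | rfl)
      · exact Set.mem_insert_of_mem _ (Or.inl ha)
      · exact Set.mem_insert_of_mem _ (Or.inr ⟨i, rfl⟩)
  refine ⟨h0', h', ?_, ag0, agi⟩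
  rw [VO.IsPartialIso, hD]
  refine ⟨?_, ?_, ?_, ?_, ?_, ?_, ?_⟩
  · rw [← hD]; exact V.gen_setOf_eq _
  · intro c hc d hd heq
    cases c with
    | inl x =>
      cases d with
      | inl y =>
        have hxy : h0' x = h0' y := Sum.inl.inj heq
        rcases (memD'inl x).1 hc with rfl | hx
        · rcases (memD'inl y).1 hd with rfl | hy
          · rfl
          · rw [h0'x₀, ag0 y hy] at hxy
            exact absurd hxy.symm (hy0fresh y hy)
        · rcases (memD'inl y).1 hd with rfl | hy
          · rw [h0'x₀, ag0 x hx] at hxy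
            exact absurd hxy (hy0fresh x hx)
          · rw [ag0 x hx, ag0 y hy] at hxy
            exact hinj hx hy (by rw [sortMap_inl, sortMap_inl, hxy])
      | inr p => simp [sortMap] at heq
    | inr p =>
      cases d with
      | inl y => simp [sortMap] at heq
      | inr q =>
        obtain ⟨i, a⟩ := p
        obtain ⟨j, b⟩ := q
        rw [sortMap_inr, sortMap_inr] at heq
        have heq2 := Sum.inr.inj heq
        rw [Sigma.mk.inj_iff] at heq2
        obtain ⟨rfl, hab⟩ := heq2
        have hab2 : h' i a = h' i b := eq_of_heq hab
        have hab3 : a = b := by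
          rcases (memD'inr i a).1 hc with ha | rfl
          · rcases (memD'inr i b).1 hd with hb | rfl
            · rw [agi i a ha, agi i b hb] at hab2
              have := hinj ha hb (by rw [sortMap_inr, sortMap_inr, hab2])
              simpa using this
            · rw [agi i a ha, h'fx₀] at hab2
              exact absurd hab2 (gne i a ha)
          · rcases (memD'inr i b).1 hd with hb | rfl
            · rw [agi i b hb, h'fx₀] at hab2
              exact absurd hab2.symm (gne i b hb)
            · rfl
        rw [hab3]
  · rw [ag0 V.zero (memA _ .zero)]; exact hz
  · intro i x y hx hy
    rcases (memD'inr i x).1 hx with hxA | rfl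
    · rcases (memD'inr i y).1 hy with hyA | rfl
      · rw [agi i x hxA, agi i y hyA]; exact hord i x y hxA hyA
      · rw [agi i x hxA, h'fx₀]
        constructor
        · exact glt i x hxA
        · intro hlt
          rcases lt_trichotomy x (V.f i x₀) with h1 | h1 | h1
          · exact h1
          · exact absurd (h1 ▸ hxA) (ht i)
          · exact absurd hlt (not_lt_of_gt (ggt i x hxA h1))
    · rcases (memD'inr i y).1 hy with hyA | rfl
      · rw [agi i y hyA, h'fx₀]
        constructor
        · exact ggt i y hyA
        · intro hlt
          rcases lt_trichotomy (V.f i x₀) y with h1 | h1 | h1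
          · exact h1
          · exact absurd (h1.symm ▸ hyA) (ht i)
          · exact absurd hlt (not_lt_of_gt (glt i y hyA h1))
      · exact ⟨fun h1 => absurd h1 (lt_irrefl _), fun h1 => absurd h1 (lt_irrefl _)⟩
  · intro i x hx
    rcases (memD'inl x).1 hx with rfl | hxA
    · rw [h'fx₀, h0'x₀]
    · have hfx : V.f i x ∈ Aset i := memA _ (.fcl i x (.mem _ hxA))
      rw [agi i _ hfx, ag0 x hxA]
      exact hf i x hxA
  · intro i y hy
    rcases (memD'inr i y).1 hy with hyA | rfl
    · have hgy : Sum.inl (V.g i y) ∈ A := memA _ (.gcl i y (.mem _ hyA))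
      rw [agi i y hyA, ag0 _ hgy]
      exact hg i y hyA
    · rw [h'fx₀, V.g_f, h0'x₀, W.g_f]
  · have hB' : sortMap h0' h' '' D' = insert (Sum.inl y₀)
        ((sortMap h0 h '' A) ∪
          Set.range (fun j : Fin n => (Sum.inr ⟨j, W.f j y₀⟩ : N0 ⊕ Sigma N))) := by
      rw [hD'def, Set.image_insert_eq, Set.image_union, himg]
      congr 1
      · rw [sortMap_inl, h0'x₀]
      · congr 1
        rw [← Set.range_comp]
        apply congrArg
        funext j
        simp only [Function.comp_apply, sortMap_inr, h'fx₀]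
    rw [hB']
    apply Set.eq_of_subset_of_subset
    · intro z hz
      induction hz with
      | mem z hz => exact hz
      | zero =>
        exact Set.mem_insert_of_mem _
          (Or.inl ⟨Sum.inl V.zero, memA _ .zero, by rw [sortMap_inl, hz]⟩)
      | fcl j x _ ih =>
        rcases ih with hx | hx | hx
        · rw [Sum.inl.inj hx]
          exact Set.mem_insert_of_mem _ (Or.inr ⟨j, rfl⟩)
        · obtain ⟨a, ha, rfl⟩ := inl_mem_sortMap_image.1 hx
          refine Set.mem_insert_of_mem _ (Or.inl ?_)
          refine ⟨Sum.inr ⟨j, V.f j a⟩, memA _ (.fcl j a (.mem _ ha)), ?_⟩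
          rw [sortMap_inr, hf j a ha]
        · obtain ⟨j', hj'⟩ := hx; simp at hj'
      | gcl j y _ ih =>
        rcases ih with hy | hy | hy
        · simp at hy
        · obtain ⟨a, ha, rfl⟩ := inr_mem_sortMap_image.1 hy
          refine Set.mem_insert_of_mem _ (Or.inl ?_)
          refine ⟨Sum.inl (V.g j a), memA _ (.gcl j a (.mem _ ha)), ?_⟩
          rw [sortMap_inl, hg j a ha]
        · obtain ⟨j', hj'⟩ := hy
          simp only [Sum.inr.injEq, Sigma.mk.inj_iff] at hj'
          obtain ⟨rfl, h2⟩ := hj'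
          rw [← eq_of_heq h2, W.g_f]
          exact Set.mem_insert _ _
    · intro z hz; exact .mem z hz

/-- Extension by a new point of a sort `M i₁` not in the range of `f i₁`. -/
lemma VO.extend_inr {n : ℕ} (hn : 1 ≤ n)
    {M0 : Type u} {M : Fin n → Type u} [∀ i, LinearOrder (M i)]
    {N0 : Type u} {N : Fin n → Type u} [∀ i, LinearOrder (N i)]
    (V : VO n M0 M) (W : VO n N0 N)
    (A : Set (M0 ⊕ Sigma M)) (hA : A.Finite)
    (h0 : M0 → N0) (h : ∀ i, M i → N i)
    (hiso : V.IsPartialIso W A h0 h) (i₁ : Fin n) (y₁ : M i₁)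
    (hy₁ : y₁ ∉ Set.range (V.f i₁)) (hmem : Sum.inr ⟨i₁, y₁⟩ ∉ A) :
    ∃ (h0' : M0 → N0) (h' : ∀ i, M i → N i),
      V.IsPartialIso W {x | V.gen (insert (Sum.inr ⟨i₁, y₁⟩) A) x} h0' h' ∧
      (∀ x : M0, Sum.inl x ∈ A → h0' x = h0 x) ∧
      (∀ (i : Fin n) (y : M i), Sum.inr ⟨i, y⟩ ∈ A → h' i y = h i y) := by
  classical
  obtain ⟨hclA, hinj, hz, hord, hf, hg, hclB⟩ := hiso
  have memA : ∀ c, V.gen A c → c ∈ A := fun c hc => hclA ▸ hc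
  set Aset : Set (M i₁) := {a | Sum.inr ⟨i₁, a⟩ ∈ A} with hAsetdef
  have hAsetf : Aset.Finite := by
    have : Aset = (fun a : M i₁ => (Sum.inr ⟨i₁, a⟩ : M0 ⊕ Sigma M)) ⁻¹' A := rfl
    rw [this]
    apply Set.Finite.preimage _ hA
    intro a _ b _ hab
    simp only [Sum.inr.injEq, Sigma.mk.inj_iff, heq_eq_eq, true_and] at hab
    exact hab
  have hAsetne : V.f i₁ V.zero ∈ Aset := memA _ (.fcl i₁ V.zero .zero)
  have ht : y₁ ∉ Aset := hmem
  obtain ⟨lo, hi, hlohi, hlow, hhigh⟩ := gap_bounds hAsetf ⟨_, hAsetne⟩ (h i₁)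
    (fun x hx y hy => hord i₁ x y hx hy) y₁ (W.no_top i₁) (W.no_bot i₁)
  obtain ⟨z, hz1, hz2, hz3⟩ := W.image_codense i₁ lo hi hlohi
  have glt : ∀ a ∈ Aset, a < y₁ → h i₁ a < z :=
    fun a ha hlt => lt_of_le_of_lt (hlow a ha hlt) hz1
  have ggt : ∀ a ∈ Aset, y₁ < a → z < h i₁ a :=
    fun a ha hlt => lt_of_lt_of_le hz2 (hhigh a ha hlt)
  have gne : ∀ a ∈ Aset, h i₁ a ≠ z := by
    intro a ha heq
    rcases lt_trichotomy a y₁ with h1 | h1 | h1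
    · exact absurd heq (ne_of_lt (glt a ha h1))
    · exact ht (h1 ▸ ha)
    · exact absurd heq.symm (ne_of_lt (ggt a ha h1))
  set h' : ∀ i, M i → N i := Function.update h i₁ (Function.update (h i₁) y₁ z) with h'def
  have h'eq : ∀ j : Fin n, j ≠ i₁ → h' j = h j := fun j hj => Function.update_of_ne hj _ _
  have h'i₁ : h' i₁ = Function.update (h i₁) y₁ z := Function.update_self _ _ _
  have agi : ∀ (j : Fin n) (a : M j), Sum.inr ⟨j, a⟩ ∈ A → h' j a = h j a := by
    intro j a ha
    rcases eq_or_ne j i₁ with rfl | hj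
    · rw [h'i₁]
      apply Function.update_of_ne
      rintro rfl; exact ht ha
    · rw [h'eq j hj]
  have agf : ∀ (j : Fin n) (x : M0), h' j (V.f j x) = h j (V.f j x) := by
    intro j x
    rcases eq_or_ne j i₁ with rfl | hj
    · rw [h'i₁]
      apply Function.update_of_ne
      intro hh; exact hy₁ ⟨x, hh⟩
    · rw [h'eq j hj]
  have h'y₁ : h' i₁ y₁ = z := by rw [h'i₁]; exact Function.update_self _ _ _
  have himg : sortMap h0 h' '' A = sortMap h0 h '' A := by
    apply Set.image_congr
    intro c hc
    cases c with
    | inl x => rfl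
    | inr p =>
      obtain ⟨j, a⟩ := p
      simp only [sortMap_inr, agi j a hc]
  set D' : Set (M0 ⊕ Sigma M) := insert (Sum.inr (⟨i₁, y₁⟩ : Sigma M)) A with hD'def
  have memD'inl : ∀ x : M0, Sum.inl x ∈ D' → Sum.inl x ∈ A := by
    intro x hx
    rcases hx with hx | hx
    · simp at hx
    · exact hx
  have hD : {x | V.gen (insert (Sum.inr ⟨i₁, y₁⟩) A) x} = D' := by
    ext c
    constructor
    · intro hc
      induction hc with
      | mem c hc => exact hc
      | zero => exact Set.mem_insert_of_mem _ (memA _ .zero)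
      | fcl j x _ ih =>
        have hx := memD'inl x ih
        exact Set.mem_insert_of_mem _ (memA _ (.fcl j x (.mem _ hx)))
      | gcl j y _ ih =>
        rcases ih with hy | hy
        · have h1 := Sum.inr.inj hy
          rw [Sigma.mk.inj_iff] at h1
          obtain ⟨rfl, h2⟩ := h1
          rw [eq_of_heq h2, V.g_not_range _ hy₁]
          exact Set.mem_insert_of_mem _ (memA _ .zero)
        · exact Set.mem_insert_of_mem _ (memA _ (.gcl j y (.mem _ hy)))
    · intro hc
      exact .mem _ hc
  refine ⟨h0, h', ?_, fun _ _ => rfl, agi⟩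
  rw [VO.IsPartialIso, hD]
  refine ⟨?_, ?_, ?_, ?_, ?_, ?_, ?_⟩
  · rw [← hD]; exact V.gen_setOf_eq _
  · intro c hc d hd heq
    cases c with
    | inl x =>
      cases d with
      | inl y =>
        have hx' := memD'inl x hc
        have hy' := memD'inl y hd
        have hxy : h0 x = h0 y := Sum.inl.inj heq
        exact hinj hx' hy' (by rw [sortMap_inl, sortMap_inl, hxy])
      | inr p => simp [sortMap] at heq
    | inr p =>
      cases d with
      | inl y => simp [sortMap] at heq
      | inr q =>
        obtain ⟨i, a⟩ := p
        obtain ⟨j, b⟩ := q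
        rw [sortMap_inr, sortMap_inr] at heq
        have heq2 := Sum.inr.inj heq
        rw [Sigma.mk.inj_iff] at heq2
        obtain ⟨rfl, hab⟩ := heq2
        have hab2 : h' i a = h' i b := eq_of_heq hab
        have hab3 : a = b := by
          rcases hc with hc' | hc'
          · have h1 := Sum.inr.inj hc'
            rw [Sigma.mk.inj_iff] at h1
            obtain ⟨rfl, h2⟩ := h1
            have ha2 : a = y₁ := eq_of_heq h2
            rcases hd with hd' | hd'
            · have h3 := Sum.inr.inj hd'
              rw [Sigma.mk.inj_iff] at h3
              obtain ⟨-, h4⟩ := h3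
              rw [ha2, eq_of_heq h4]
            · subst ha2
              rw [h'y₁, agi _ b hd'] at hab2
              exact absurd hab2.symm (gne b hd')
          · rcases hd with hd' | hd'
            · have h3 := Sum.inr.inj hd'
              rw [Sigma.mk.inj_iff] at h3
              obtain ⟨rfl, h4⟩ := h3
              have hb2 : b = y₁ := eq_of_heq h4
              subst hb2
              rw [h'y₁, agi _ a hc'] at hab2
              exact absurd hab2 (gne a hc')
            · rw [agi i a hc', agi i b hd'] at hab2
              have := hinj hc' hd' (by rw [sortMap_inr, sortMap_inr, hab2])
              simpa using this
        rw [hab3]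
  · exact hz
  · intro i x y hx hy
    rcases hx with hx' | hx'
    · have h1 := Sum.inr.inj hx'
      rw [Sigma.mk.inj_iff] at h1
      obtain ⟨rfl, h2⟩ := h1
      have hx2 : x = y₁ := eq_of_heq h2
      rw [hx2]
      rcases hy with hy' | hy'
      · have h3 := Sum.inr.inj hy'
        rw [Sigma.mk.inj_iff] at h3
        obtain ⟨-, h4⟩ := h3
        rw [eq_of_heq h4]
        exact ⟨fun h1 => absurd h1 (lt_irrefl _), fun h1 => absurd h1 (lt_irrefl _)⟩
      · rw [agi _ y hy', h'y₁]
        constructor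
        · exact ggt y hy'
        · intro hlt
          rcases lt_trichotomy y₁ y with h1 | h1 | h1
          · exact h1
          · exact absurd (h1.symm ▸ hy') ht
          · exact absurd hlt (not_lt_of_gt (glt y hy' h1))
    · rcases hy with hy' | hy'
      · have h3 := Sum.inr.inj hy'
        rw [Sigma.mk.inj_iff] at h3
        obtain ⟨rfl, h4⟩ := h3
        have hy2 : y = y₁ := eq_of_heq h4
        rw [hy2, agi _ x hx', h'y₁]
        constructor
        · exact glt x hx'
        · intro hlt
          rcases lt_trichotomy x y₁ with h1 | h1 | h1
          · exact h1
          · exact absurd (h1 ▸ hx') ht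
          · exact absurd hlt (not_lt_of_gt (ggt x hx' h1))
      · rw [agi i x hx', agi i y hy']
        exact hord i x y hx' hy'
  · intro i x hx
    have hx' := memD'inl x hx
    rw [agf i x]
    exact hf i x hx'
  · intro i y hy
    rcases hy with hy' | hy'
    · have h1 := Sum.inr.inj hy'
      rw [Sigma.mk.inj_iff] at h1
      obtain ⟨rfl, h2⟩ := h1
      have hy2 : y = y₁ := eq_of_heq h2
      subst hy2
      rw [h'y₁, V.g_not_range _ hy₁, W.g_not_range _ hz3, hz]
    · rw [agi i y hy']
      exact hg i y hy'
  · have hB' : sortMap h0 h' '' D' =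
        insert (Sum.inr (⟨i₁, z⟩ : Sigma N)) (sortMap h0 h '' A) := by
      rw [hD'def, Set.image_insert_eq, himg, sortMap_inr, h'y₁]
    rw [hB']
    apply Set.eq_of_subset_of_subset
    · intro w hw
      induction hw with
      | mem w hw => exact hw
      | zero =>
        exact Set.mem_insert_of_mem _
          ⟨Sum.inl V.zero, memA _ .zero, by rw [sortMap_inl, hz]⟩
      | fcl j x _ ih =>
        rcases ih with hx | hx
        · simp at hx
        · obtain ⟨a, ha, rfl⟩ := inl_mem_sortMap_image.1 hx
          refine Set.mem_insert_of_mem _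
            ⟨Sum.inr ⟨j, V.f j a⟩, memA _ (.fcl j a (.mem _ ha)), ?_⟩
          rw [sortMap_inr, hf j a ha]
      | gcl j y _ ih =>
        rcases ih with hy | hy
        · have h1 := Sum.inr.inj hy
          rw [Sigma.mk.inj_iff] at h1
          obtain ⟨rfl, h2⟩ := h1
          rw [eq_of_heq h2, W.g_not_range _ hz3]
          exact Set.mem_insert_of_mem _
            ⟨Sum.inl V.zero, memA _ .zero, by rw [sortMap_inl, hz]⟩
        · obtain ⟨a, ha, rfl⟩ := inr_mem_sortMap_image.1 hy
          refine Set.mem_insert_of_mem _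
            ⟨Sum.inl (V.g j a), memA _ (.gcl j a (.mem _ ha)), ?_⟩
          rw [sortMap_inl, hg j a ha]
    · intro w hw
      exact .mem w hw

/-- Finite partial isomorphisms between `VO n`-structures (`n ≥ 1`) extend one
element at a time: if `(h0, h)` is a partial isomorphism with finite domain `A = ⟨A⟩` and `b` is
any element of any sort of `M`, then there is a partial isomorphism with domain `⟨A ∪ {b}⟩`
agreeing with `(h0, h)` on `A`. -/
theorem VO.partialIso_extend {n : ℕ} (hn : 1 ≤ n)
    {M0 : Type u} {M : Fin n → Type u} [∀ i, LinearOrder (M i)]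
    {N0 : Type u} {N : Fin n → Type u} [∀ i, LinearOrder (N i)]
    (V : VO n M0 M) (W : VO n N0 N)
    (A : Set (M0 ⊕ Sigma M)) (hA : A.Finite)
    (h0 : M0 → N0) (h : ∀ i, M i → N i)
    (hiso : V.IsPartialIso W A h0 h) (b : M0 ⊕ Sigma M) :
    ∃ (h0' : M0 → N0) (h' : ∀ i, M i → N i),
      V.IsPartialIso W {x | V.gen (insert b A) x} h0' h' ∧
      (∀ x : M0, Sum.inl x ∈ A → h0' x = h0 x) ∧
      (∀ (i : Fin n) (y : M i), Sum.inr ⟨i, y⟩ ∈ A → h' i y = h i y) := by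
  classical
  have memA : ∀ c, V.gen A c → c ∈ A := fun c hc => hiso.1 ▸ hc
  by_cases hb : b ∈ A
  · have hDA : {x | V.gen (insert b A) x} = A := by
      apply Set.eq_of_subset_of_subset
      · intro c hc
        apply memA
        apply V.gen_mono (A := insert b A) ?_ c hc
        intro x hx
        rcases hx with rfl | hx
        · exact .mem _ hb
        · exact .mem _ hx
      · intro c hc
        exact .mem _ (Set.mem_insert_of_mem _ hc)
    refine ⟨h0, h, ?_, fun _ _ => rfl, fun _ _ _ => rfl⟩
    rw [hDA]
    exact hiso
  · cases b with
    | inl x₀ => exact V.extend_inl hn W A hA h0 h hiso x₀ hb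
    | inr p =>
      obtain ⟨i₁, y₁⟩ := p
      by_cases hr : y₁ ∈ Set.range (V.f i₁)
      · obtain ⟨x₀, rfl⟩ := hr
        have hx₀ : Sum.inl x₀ ∉ A := fun hx => hb (memA _ (.fcl i₁ x₀ (.mem _ hx)))
        have hsets : {c | V.gen (insert (Sum.inr ⟨i₁, V.f i₁ x₀⟩) A) c}
            = {c | V.gen (insert (Sum.inl x₀) A) c} := by
          apply Set.eq_of_subset_of_subset
          · intro c hc
            apply V.gen_mono ?_ c hc
            intro x hx
            rcases hx with rfl | hx
            · exact .fcl i₁ x₀ (.mem _ (Set.mem_insert _ _))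
            · exact .mem _ (Set.mem_insert_of_mem _ hx)
          · intro c hc
            apply V.gen_mono ?_ c hc
            intro x hx
            rcases hx with rfl | hx
            · have h1 := VO.gen.gcl (V := V) (A := insert (Sum.inr ⟨i₁, V.f i₁ x₀⟩) A)
                i₁ (V.f i₁ x₀) (.mem _ (Set.mem_insert _ _))
              rw [V.g_f] at h1
              exact h1
            · exact .mem _ (Set.mem_insert_of_mem _ hx)
        rw [hsets]
        exact V.extend_inl hn W A hA h0 h hiso x₀ hx₀
      · exact V.extend_inr hn W A hA h0 h hiso i₁ y₁ hr hb
end Helpers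
end

section
/- Existence of maximal multi-intervals: let M be a VO_n-structure, let A be a finite subset of the disjoint union of the sorts of M, and let E ⊆ M₀ be a multi-open basic-interval combination presented over A. Then for every e ∈ E there exists a maximal multi-interval X(e) = ⋂_{i=1}^n fᵢ⁻¹(Xⁱ(e)) in E containing e, and for each i the (finite) endpoints of Xⁱ(e) lie in ⟨A⟩ ∩ Mᵢ. -/
universe u

variable {n : ℕ} {M0 : Type u} {M : Fin n → Type u} [∀ i, LinearOrder (M i)]

/-- A basic-interval combination presented over `A`: a member of the Boolean algebra of
subsets of `M₀` generated by the singletons `{a}` with `Sum.inl a ∈ A` and the preimages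
`fᵢ⁻¹(Iⁱ)` of open intervals of `Mᵢ` whose finite endpoints lie in `A ∩ Mᵢ`. -/
inductive VO.BIC (V : VO n M0 M) (A : Set (M0 ⊕ Sigma M)) : Set M0 → Prop
  | single (a : M0) (ha : Sum.inl a ∈ A) : VO.BIC V A {a}
  | interval (i : Fin n) (I : Set (M i)) (hI : IsOpenInterval I)
      (hend : EndpointsIn I {x : M i | Sum.inr ⟨i, x⟩ ∈ A}) : VO.BIC V A (V.f i ⁻¹' I)
  | empty : VO.BIC V A ∅
  | compl (E : Set M0) (hE : VO.BIC V A E) : VO.BIC V A Eᶜ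
  | union (E F : Set M0) (hE : VO.BIC V A E) (hF : VO.BIC V A F) : VO.BIC V A (E ∪ F)

section Io2
variable {α : Type*} [LinearOrder α]

/-- The open interval of `α` with endpoints `u ∈ α ∪ {-∞}`, `v ∈ α ∪ {+∞}`. -/
def Io2 (u : WithBot α) (v : WithTop α) : Set α :=
  {y | u < (y : WithBot α) ∧ (y : WithTop α) < v}

lemma mem_Io2 {u : WithBot α} {v : WithTop α} {y : α} :
    y ∈ Io2 u v ↔ u < (y : WithBot α) ∧ (y : WithTop α) < v := Iff.rfl

lemma Io2_bot_top : (Io2 ⊥ ⊤ : Set α) = Set.univ := by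
  ext y; simp [mem_Io2, WithBot.bot_lt_coe, WithTop.coe_lt_top]

lemma Io2_coe_coe (a b : α) : Io2 (a : WithBot α) (b : WithTop α) = Set.Ioo a b := by
  ext y; simp [mem_Io2, Set.mem_Ioo, WithBot.coe_lt_coe, WithTop.coe_lt_coe]

lemma Io2_coe_top (a : α) : Io2 (a : WithBot α) (⊤ : WithTop α) = Set.Ioi a := by
  ext y; simp [mem_Io2, Set.mem_Ioi, WithBot.coe_lt_coe, WithTop.coe_lt_top]

lemma Io2_bot_coe (b : α) : Io2 (⊥ : WithBot α) (b : WithTop α) = Set.Iio b := by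
  ext y; simp [mem_Io2, Set.mem_Iio, WithBot.bot_lt_coe, WithTop.coe_lt_coe]

lemma isOpenInterval_Io2 (u : WithBot α) (v : WithTop α) : IsOpenInterval (Io2 u v) := by
  rcases u with _ | a <;> rcases v with _ | b
  · right; right; right; exact Io2_bot_top
  · right; right; left; exact ⟨b, Io2_bot_coe b⟩
  · right; left; exact ⟨a, Io2_coe_top a⟩
  · left; exact ⟨a, b, Io2_coe_coe a b⟩

lemma IsOpenInterval.exists_io2 {I : Set α} (h : IsOpenInterval I) :
    ∃ (u : WithBot α) (v : WithTop α), I = Io2 u v := by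
  rcases h with ⟨a, b, rfl⟩ | ⟨a, rfl⟩ | ⟨b, rfl⟩ | rfl
  · exact ⟨a, b, (Io2_coe_coe a b).symm⟩
  · exact ⟨a, ⊤, (Io2_coe_top a).symm⟩
  · exact ⟨⊥, b, (Io2_bot_coe b).symm⟩
  · exact ⟨⊥, ⊤, Io2_bot_top.symm⟩

lemma Io2_inter (u u' : WithBot α) (v v' : WithTop α) :
    Io2 u v ∩ Io2 u' v' = Io2 (u ⊔ u') (v ⊓ v') := by
  ext y; simp only [Set.mem_inter_iff, mem_Io2, sup_lt_iff, lt_inf_iff]; tauto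

lemma Io2_mono {u u' : WithBot α} {v v' : WithTop α} (hu : u' ≤ u) (hv : v ≤ v') :
    Io2 u v ⊆ Io2 u' v' := fun y hy => ⟨lt_of_le_of_lt hu hy.1, lt_of_lt_of_le hy.2 hv⟩

lemma Io2_union_subset {u u' : WithBot α} {v v' : WithTop α} {p : α}
    (h1 : p ∈ Io2 u v) (h2 : p ∈ Io2 u' v') :
    Io2 (u ⊓ u') (v ⊔ v') ⊆ Io2 u v ∪ Io2 u' v' := by
  intro y hy
  rcases hy with ⟨hyl, hyr⟩
  by_cases h : y ∈ Io2 u v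
  · exact Or.inl h
  · right
    rcases not_and_or.1 h with hl | hr
    · -- ¬ u < y, so y ≤ u
      have hyu : (y : WithBot α) ≤ u := not_lt.1 hl
      have hu' : u' < (y : WithBot α) := by
        rcases inf_lt_iff.1 hyl with h' | h'
        · exact absurd (lt_of_lt_of_le h' hyu) (lt_irrefl u)
        · exact h'
      have hyp : y < p := by
        have : (y : WithBot α) < (p : WithBot α) := lt_of_le_of_lt hyu h1.1
        exact WithBot.coe_lt_coe.1 this
      exact ⟨hu', lt_of_lt_of_le (WithTop.coe_lt_coe.2 hyp) (le_of_lt h2.2)⟩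
    · have hvy : v ≤ (y : WithTop α) := not_lt.1 hr
      have hv' : (y : WithTop α) < v' := by
        rcases lt_sup_iff.1 hyr with h' | h'
        · exact absurd (lt_of_le_of_lt hvy h') (lt_irrefl _)
        · exact h'
      have hpy : p < y := by
        have : (p : WithTop α) < (y : WithTop α) := lt_of_lt_of_le h1.2 hvy
        exact WithTop.coe_lt_coe.1 this
      exact ⟨lt_trans h2.1 (WithBot.coe_lt_coe.2 hpy), hv'⟩

lemma endpointsIn_Io2 {u : WithBot α} {v : WithTop α} {S : Set α}
    (hu : u ∈ insert ⊥ (((↑) : α → WithBot α) '' S))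
    (hv : v ∈ insert ⊤ (((↑) : α → WithTop α) '' S)) :
    EndpointsIn (Io2 u v) S := by
  rcases hu with rfl | ⟨a, ha, rfl⟩ <;> rcases hv with rfl | ⟨b, hb, rfl⟩
  · right; right; right; exact Io2_bot_top
  · right; right; left; exact ⟨b, hb, Io2_bot_coe b⟩
  · right; left; exact ⟨a, ha, Io2_coe_top a⟩
  · left; exact ⟨a, ha, b, hb, Io2_coe_coe a b⟩

lemma isOpenInterval_inter {I I' : Set α} (h : IsOpenInterval I) (h' : IsOpenInterval I') :
    IsOpenInterval (I ∩ I') := by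
  obtain ⟨u, v, rfl⟩ := h.exists_io2
  obtain ⟨u', v', rfl⟩ := h'.exists_io2
  rw [Io2_inter]; exact isOpenInterval_Io2 _ _

/-- Extract a bounded nonempty `Ioo` around a point of an `Io2`. -/
lemma exists_Ioo_subset_Io2 {u : WithBot α} {v : WithTop α} {p : α}
    (hu : u < (p : WithBot α)) (hv : (p : WithTop α) < v)
    (hbot : ∀ a : α, ∃ b, b < a) (htop : ∀ a : α, ∃ b, a < b) :
    ∃ a b : α, a < p ∧ p < b ∧ Set.Ioo a b ⊆ Io2 u v := by
  obtain ⟨a, ha, hau⟩ : ∃ a : α, a < p ∧ u ≤ (a : WithBot α) := by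
    rcases u with _ | a
    · obtain ⟨c, hc⟩ := hbot p; exact ⟨c, hc, bot_le⟩
    · exact ⟨a, WithBot.coe_lt_coe.1 hu, le_refl _⟩
  obtain ⟨b, hb, hbv⟩ : ∃ b : α, p < b ∧ (b : WithTop α) ≤ v := by
    rcases v with _ | b
    · obtain ⟨c, hc⟩ := htop p; exact ⟨c, hc, le_top⟩
    · exact ⟨b, WithTop.coe_lt_coe.1 hv, le_refl _⟩
  refine ⟨a, b, ha, hb, fun y hy => ⟨?_, ?_⟩⟩
  · exact lt_of_le_of_lt hau (WithBot.coe_lt_coe.2 hy.1)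
  · exact lt_of_lt_of_le (WithTop.coe_lt_coe.2 hy.2) hbv

end Io2
section Sat
variable {α : Type*} [LinearOrder α]

lemma finsetMax_lt_coe {s : Finset α} {x : α} (h : ∀ a ∈ s, a < x) :
    s.max < (x : WithBot α) := by
  rcases hs : s.max with _ | a
  · exact WithBot.bot_lt_coe x
  · exact WithBot.coe_lt_coe.2 (h a (Finset.mem_of_max hs))

lemma coe_lt_finsetMin {s : Finset α} {x : α} (h : ∀ a ∈ s, x < a) :
    (x : WithTop α) < s.min := by
  rcases hs : s.min with _ | a
  · exact WithTop.coe_lt_top x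
  · exact WithTop.coe_lt_coe.2 (h a (Finset.mem_of_min hs))

variable (C : Set α) (hC : C.Finite)

/-- Round a lower endpoint down to the nearest endpoint in `C`, or `⊥`. -/
noncomputable def satL (u : WithBot α) : WithBot α :=
  (hC.toFinset.filter fun c : α => ((c : WithBot α) ≤ u)).max

/-- Round an upper endpoint up to the nearest endpoint in `C`, or `⊤`. -/
noncomputable def satR (v : WithTop α) : WithTop α :=
  (hC.toFinset.filter fun c : α => (v ≤ (c : WithTop α))).min

lemma satL_le (u : WithBot α) : satL C hC u ≤ u := by
  rw [satL, Finset.max_le_iff]; intro a ha; exact (Finset.mem_filter.1 ha).2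

lemma le_satR (v : WithTop α) : v ≤ satR C hC v := by
  rw [satR, Finset.le_min_iff]; intro a ha; exact (Finset.mem_filter.1 ha).2

lemma le_satL {u : WithBot α} {c : α} (hc : c ∈ C) (h : (c : WithBot α) ≤ u) :
    (c : WithBot α) ≤ satL C hC u :=
  Finset.le_max (Finset.mem_filter.2 ⟨hC.mem_toFinset.2 hc, h⟩)

lemma satR_le {v : WithTop α} {c : α} (hc : c ∈ C) (h : v ≤ (c : WithTop α)) :
    satR C hC v ≤ (c : WithTop α) :=
  Finset.min_le (Finset.mem_filter.2 ⟨hC.mem_toFinset.2 hc, h⟩)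

lemma satL_mem (u : WithBot α) : satL C hC u ∈ insert ⊥ (((↑) : α → WithBot α) '' C) := by
  rcases hs : satL C hC u with _ | a
  · exact Set.mem_insert _ _
  · exact Set.mem_insert_of_mem _
      ⟨a, (hC.mem_toFinset.1 (Finset.mem_filter.1 (Finset.mem_of_max hs)).1), rfl⟩

lemma satR_mem (v : WithTop α) : satR C hC v ∈ insert ⊤ (((↑) : α → WithTop α) '' C) := by
  rcases hs : satR C hC v with _ | a
  · exact Set.mem_insert _ _
  · exact Set.mem_insert_of_mem _
      ⟨a, (hC.mem_toFinset.1 (Finset.mem_filter.1 (Finset.mem_of_min hs)).1), rfl⟩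

/-- The lower end of the cell of `C` containing `x`. -/
noncomputable def lowC (x : α) : WithBot α :=
  (hC.toFinset.filter fun c => c < x).max

/-- The upper end of the cell of `C` containing `x`. -/
noncomputable def highC (x : α) : WithTop α :=
  (hC.toFinset.filter fun c => x < c).min

lemma lowC_lt (x : α) : lowC C hC x < (x : WithBot α) :=
  finsetMax_lt_coe (fun a ha => (Finset.mem_filter.1 ha).2)

lemma lt_highC (x : α) : (x : WithTop α) < highC C hC x :=
  coe_lt_finsetMin (fun a ha => (Finset.mem_filter.1 ha).2)

lemma le_lowC {x c : α} (hc : c ∈ C) (h : c < x) : (c : WithBot α) ≤ lowC C hC x :=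
  Finset.le_max (Finset.mem_filter.2 ⟨hC.mem_toFinset.2 hc, h⟩)

lemma highC_le {x c : α} (hc : c ∈ C) (h : x < c) : highC C hC x ≤ (c : WithTop α) :=
  Finset.min_le (Finset.mem_filter.2 ⟨hC.mem_toFinset.2 hc, h⟩)

lemma lowC_lt_coe {x : α} {y : α} (h : ∀ c ∈ C, c < x → c < y) :
    lowC C hC x < (y : WithBot α) :=
  finsetMax_lt_coe (fun a ha => h a (hC.mem_toFinset.1 (Finset.mem_filter.1 ha).1)
    (Finset.mem_filter.1 ha).2)

lemma coe_lt_highC {x : α} {y : α} (h : ∀ c ∈ C, x < c → y < c) :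
    (y : WithTop α) < highC C hC x :=
  coe_lt_finsetMin (fun a ha => h a (hC.mem_toFinset.1 (Finset.mem_filter.1 ha).1)
    (Finset.mem_filter.1 ha).2)

/-- Any point of the `C`-cell of `x` has the same order relations to `C` as `x`. -/
lemma rel_transfer {x : α} (hx : x ∉ C) {y : α}
    (hy : y ∈ Io2 (lowC C hC x) (highC C hC x)) :
    ∀ c ∈ C, (c < x ↔ c < y) ∧ (x < c ↔ y < c) := by
  intro c hc
  constructor
  · constructor
    · intro h
      exact WithBot.coe_lt_coe.1 (lt_of_le_of_lt (le_lowC C hC hc h) hy.1)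
    · intro h
      rcases lt_trichotomy c x with h' | h' | h'
      · exact h'
      · exact absurd (h' ▸ hc) hx
      · exact absurd (lt_of_lt_of_le hy.2 (highC_le C hC hc h'))
          (not_lt.2 (le_of_lt (WithTop.coe_lt_coe.2 h)))
  · constructor
    · intro h
      exact WithTop.coe_lt_coe.1 (lt_of_lt_of_le hy.2 (highC_le C hC hc h))
    · intro h
      rcases lt_trichotomy x c with h' | h' | h'
      · exact h'
      · exact absurd (h' ▸ hc) hx
      · exact absurd (lt_of_le_of_lt (le_lowC C hC hc h') hy.1)
          (not_lt.2 (le_of_lt (WithBot.coe_lt_coe.2 h)))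

end Sat
namespace VO
variable (V : VO n M0 M) (A : Set (M0 ⊕ Sigma M))

/-- The finite set of `M0`-points generated by `A` in one round. -/
def S0' : Set M0 :=
  insert V.zero ({a | Sum.inl a ∈ A} ∪ ⋃ j, V.g j '' {b | Sum.inr ⟨j, b⟩ ∈ A})

/-- The finite set of relevant endpoints in sort `i`. -/
def Cs (i : Fin n) : Set (M i) := {b | Sum.inr ⟨i, b⟩ ∈ A} ∪ V.f i '' V.S0' A

lemma g_f_s5 (i : Fin n) (x : M0) : V.g i (V.f i x) = x := by
  rw [VO.g, dif_pos ⟨x, rfl⟩]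
  exact V.f_inj i (⟨x, rfl⟩ : ∃ y, V.f i y = V.f i x).choose_spec

lemma S0'_finite (hA : A.Finite) : (V.S0' A).Finite := by
  refine Set.Finite.insert _ (Set.Finite.union ?_ ?_)
  · exact Set.Finite.preimage (Set.injOn_of_injective Sum.inl_injective) hA
  · refine Set.finite_iUnion fun j => Set.Finite.image _ ?_
    exact Set.Finite.preimage
      (Set.injOn_of_injective fun a b h => by
        injection h with h'; exact eq_of_heq (Sigma.mk.inj_iff.1 h').2) hA

lemma Cs_finite (hA : A.Finite) (i : Fin n) : (V.Cs A i).Finite := by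
  refine Set.Finite.union ?_ (Set.Finite.image _ (V.S0'_finite A hA))
  exact Set.Finite.preimage
    (Set.injOn_of_injective fun a b h => by
      injection h with h'; exact eq_of_heq (Sigma.mk.inj_iff.1 h').2) hA

lemma S0'_subset_gen : ∀ x ∈ V.S0' A, V.gen A (Sum.inl x) := by
  rintro x (rfl | hx)
  · exact VO.gen.zero
  · rcases hx with hx | hx
    · exact VO.gen.mem _ hx
    · obtain ⟨j, b, hb, rfl⟩ := by simpa using hx
      exact VO.gen.gcl j b (VO.gen.mem _ hb)

lemma Cs_subset_gen (i : Fin n) : ∀ c ∈ V.Cs A i, V.gen A (Sum.inr ⟨i, c⟩) := by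
  rintro c (hc | ⟨x, hx, rfl⟩)
  · exact VO.gen.mem _ hc
  · exact VO.gen.fcl i x (V.S0'_subset_gen A x hx)

lemma mem_S0'_of_f_mem_Cs {i : Fin n} {x : M0} (h : V.f i x ∈ V.Cs A i) : x ∈ V.S0' A := by
  rcases h with h | ⟨s, hs, hfs⟩
  · right; right
    refine Set.mem_iUnion.2 ⟨i, ⟨V.f i x, h, V.g_f_s5 i x⟩⟩
  · rwa [V.f_inj i hfs] at hs

/-- Membership in a basic-interval combination presented over `A` only depends on the
order relations of the coordinates to the finite endpoint sets `Cs`. -/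
lemma bic_inv (hn : 1 ≤ n) {E : Set M0} (hE : V.BIC A E) (x x' : M0)
    (h : ∀ i, ∀ c ∈ V.Cs A i, (c < V.f i x ↔ c < V.f i x') ∧ (V.f i x < c ↔ V.f i x' < c)) :
    x ∈ E ↔ x' ∈ E := by
  induction hE with
  | single a ha =>
      have i0 : Fin n := ⟨0, hn⟩
      have hfa : V.f i0 a ∈ V.Cs A i0 :=
        Or.inr ⟨a, Or.inr (Or.inl ha), rfl⟩
      have key : ∀ y : M0, y = a ↔
          (¬ V.f i0 a < V.f i0 y ∧ ¬ V.f i0 y < V.f i0 a) := by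
        intro y
        constructor
        · rintro rfl; exact ⟨lt_irrefl _, lt_irrefl _⟩
        · rintro ⟨h1, h2⟩
          exact V.f_inj i0 (le_antisymm (not_lt.1 h1) (not_lt.1 h2))
      simp only [Set.mem_singleton_iff, key]
      rw [(h i0 _ hfa).1, (h i0 _ hfa).2]
  | interval i I hI hend =>
      have hsub : {b : M i | Sum.inr ⟨i, b⟩ ∈ A} ⊆ V.Cs A i := fun b hb => Or.inl hb
      rcases hend with ⟨a, ha, b, hb, rfl⟩ | ⟨a, ha, rfl⟩ | ⟨b, hb, rfl⟩ | rfl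
      · simp only [Set.mem_preimage, Set.mem_Ioo]
        rw [(h i a (hsub ha)).1, (h i b (hsub hb)).2]
      · simp only [Set.mem_preimage, Set.mem_Ioi]
        rw [(h i a (hsub ha)).1]
      · simp only [Set.mem_preimage, Set.mem_Iio]
        rw [(h i b (hsub hb)).2]
      · simp
  | empty => simp
  | compl E hE ih => simp only [Set.mem_compl_iff]; rw [ih]
  | union E F hE hF ihE ihF => simp only [Set.mem_union]; rw [ihE, ihF]

end VO
section Helpers
variable {α : Type*} [LinearOrder α]

lemma exists_lt_of_coe_lt_withTop {a : α} {z : WithTop α}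
    (h : (a : WithTop α) < z) (htop : ∀ x : α, ∃ y, x < y)
    (hdense : ∀ x y : α, x < y → ∃ c, x < c ∧ c < y) :
    ∃ p : α, a < p ∧ (p : WithTop α) < z := by
  rcases z with _ | w
  · obtain ⟨p, hp⟩ := htop a; exact ⟨p, hp, WithTop.coe_lt_top p⟩
  · obtain ⟨p, h1, h2⟩ := hdense a w (WithTop.coe_lt_coe.1 h)
    exact ⟨p, h1, WithTop.coe_lt_coe.2 h2⟩

lemma exists_lt_of_withBot_lt_coe {a : α} {z : WithBot α}
    (h : z < (a : WithBot α)) (hbot : ∀ x : α, ∃ y, y < x)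
    (hdense : ∀ x y : α, x < y → ∃ c, x < c ∧ c < y) :
    ∃ p : α, p < a ∧ z < (p : WithBot α) := by
  rcases z with _ | w
  · obtain ⟨p, hp⟩ := hbot a; exact ⟨p, hp, WithBot.bot_lt_coe p⟩
  · obtain ⟨p, h1, h2⟩ := hdense w a (WithBot.coe_lt_coe.1 h)
    exact ⟨p, h2, WithBot.coe_lt_coe.2 h1⟩

end Helpers

namespace VO

/-- The key saturation lemma: if a box with `m`-component `Io2 u v` is contained in `E`,
then the box with the `m`-component widened to the nearest `Cs`-endpoints is still in `E`. -/
lemma sat_lemma (hn : 1 ≤ n) (V : VO n M0 M) (A : Set (M0 ⊕ Sigma M)) (hA : A.Finite)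
    {E : Set M0} (hE : V.BIC A E) (m : Fin n) (Box : ∀ i, Set (M i))
    (hBox : ∀ i, IsOpenInterval (Box i))
    (u : WithBot (M m)) (v : WithTop (M m)) (hm : Box m = Io2 u v)
    (q : M m) (hqu : u < (q : WithBot (M m))) (hqv : (q : WithTop (M m)) < v)
    (hsub : (⋂ i, V.f i ⁻¹' Box i) ⊆ E) :
    (⋂ i, ⋂ _ : i ≠ m, V.f i ⁻¹' Box i) ∩
      V.f m ⁻¹' Io2 (satL _ (V.Cs_finite A hA m) u) (satR _ (V.Cs_finite A hA m) v) ⊆ E := by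
  classical
  set hC := V.Cs_finite A hA
  intro x hx
  obtain ⟨hxB, hxm⟩ := hx
  rw [Set.mem_preimage, mem_Io2] at hxm
  have hxB' : ∀ i, i ≠ m → V.f i x ∈ Box i := by
    intro i hi
    have := Set.mem_iInter.1 hxB i
    exact Set.mem_iInter.1 this hi
  by_cases hmid : V.f m x ∈ Io2 u v
  · refine hsub (Set.mem_iInter.2 fun i => ?_)
    by_cases hi : i = m
    · subst hi; rw [Set.mem_preimage, hm]; exact hmid
    · exact hxB' i hi
  -- the gap case
  have hgap : ((V.f m x : WithBot (M m)) ≤ u) ∨ (v ≤ (V.f m x : WithTop (M m))) := by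
    rcases not_and_or.1 hmid with h | h
    · exact Or.inl (not_lt.1 h)
    · exact Or.inr (not_lt.1 h)
  have hfmxC : V.f m x ∉ V.Cs A m := by
    intro hc
    rcases hgap with hg | hg
    · exact absurd (le_satL _ (hC m) hc hg) (not_le.2 hxm.1)
    · exact absurd (satR_le _ (hC m) hc hg) (not_le.2 hxm.2)
  have hnotC : ∀ i, V.f i x ∉ V.Cs A i := by
    intro i hc
    exact hfmxC (Or.inr ⟨x, V.mem_S0'_of_f_mem_Cs A hc, rfl⟩)
  -- represent each Box i as an Io2, with the given pair at m
  have hrep : ∀ i, ∃ (w : WithBot (M i)) (z : WithTop (M i)), Box i = Io2 w z :=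
    fun i => (hBox i).exists_io2
  choose ub0 vb0 hub0 using hrep
  set ub : ∀ i, WithBot (M i) := Function.update ub0 m u with hubdef
  set vb : ∀ i, WithTop (M i) := Function.update vb0 m v with hvbdef
  have hub : ∀ i, i ≠ m → Box i = Io2 (ub i) (vb i) := by
    intro i hi
    rw [hubdef, hvbdef]
    simp only [Function.update_of_ne hi]
    exact hub0 i
  have hubm : ub m = u := Function.update_self _ _ _
  have hvbm : vb m = v := Function.update_self _ _ _
  -- the target pairs
  set W : ∀ i, WithBot (M i) := fun i => ub i ⊔ lowC _ (hC i) (V.f i x) with hWdef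
  set Z : ∀ i, WithTop (M i) := fun i => vb i ⊓ highC _ (hC i) (V.f i x) with hZdef
  -- each target is nonempty
  have hne : ∀ i, ∃ p : M i, W i < (p : WithBot (M i)) ∧ (p : WithTop (M i)) < Z i := by
    intro i
    by_cases hi : i = m
    · subst hi
      rcases hgap with hg | hg
      · -- V.f i x ≤ u : extend to the left of u
        rcases hu' : u with _ | u'
        · rw [hu'] at hg; exact absurd hg (WithBot.not_coe_le_bot _)
        · rw [hu'] at hqu
          have hu'v : (u' : WithTop (M i)) < v := by
            have h1 : u' < q := WithBot.coe_lt_coe.1 hqu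
            exact lt_trans (WithTop.coe_lt_coe.2 h1) hqv
          have hu'h : (u' : WithTop (M i)) < highC _ (hC i) (V.f i x) := by
            refine coe_lt_highC _ (hC i) fun c hc hfc => ?_
            by_contra hle
            have h1 : (c : WithBot (M i)) ≤ u := by
              rw [hu']; exact WithBot.coe_le_coe.2 (not_lt.1 hle)
            have h2 := le_satL _ (hC i) hc h1
            exact absurd (lt_trans hxm.1 (WithBot.coe_lt_coe.2 hfc))
              (not_lt.2 h2)
          obtain ⟨p, hp1, hp2⟩ := exists_lt_of_coe_lt_withTop
            (lt_inf_iff.2 ⟨hu'v, hu'h⟩) (V.no_top i) (V.lt_dense i)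
          refine ⟨p, ?_, ?_⟩
          · show ub i ⊔ lowC _ (hC i) (V.f i x) < (p : WithBot (M i))
            refine sup_lt_iff.2 ⟨?_, ?_⟩
            · rw [hubm, hu']; exact WithBot.coe_lt_coe.2 hp1
            · rw [hu'] at hg
              exact lt_trans (lt_of_lt_of_le (lowC_lt _ (hC i) (V.f i x)) hg)
                (WithBot.coe_lt_coe.2 hp1)
          · show (p : WithTop (M i)) < vb i ⊓ highC _ (hC i) (V.f i x)
            rw [hvbm]; exact hp2
      · -- v ≤ V.f i x : extend to the right of v
        rcases hv' : v with _ | v'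
        · rw [hv'] at hg; exact absurd hg (WithTop.not_top_le_coe _)
        · rw [hv'] at hqv
          have huv' : u < (v' : WithBot (M i)) := by
            have h1 : q < v' := WithTop.coe_lt_coe.1 hqv
            exact lt_trans hqu (WithBot.coe_lt_coe.2 h1)
          have hlv' : lowC _ (hC i) (V.f i x) < (v' : WithBot (M i)) := by
            refine lowC_lt_coe _ (hC i) fun c hc hfc => ?_
            by_contra hle
            have h1 : v ≤ (c : WithTop (M i)) := by
              rw [hv']; exact WithTop.coe_le_coe.2 (not_lt.1 hle)
            have h2 := satR_le _ (hC i) hc h1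
            exact absurd (lt_trans (WithTop.coe_lt_coe.2 hfc) hxm.2)
              (not_lt.2 h2)
          obtain ⟨p, hp1, hp2⟩ := exists_lt_of_withBot_lt_coe
            (sup_lt_iff.2 ⟨huv', hlv'⟩) (V.no_bot i) (V.lt_dense i)
          have hv'fx : v' ≤ V.f i x := by
            rw [hv'] at hg; exact WithTop.coe_le_coe.1 hg
          refine ⟨p, ?_, ?_⟩
          · show ub i ⊔ lowC _ (hC i) (V.f i x) < (p : WithBot (M i))
            rw [hubm]; exact hp2
          · show (p : WithTop (M i)) < vb i ⊓ highC _ (hC i) (V.f i x)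
            refine lt_inf_iff.2 ⟨?_, ?_⟩
            · rw [hvbm, hv']; exact WithTop.coe_lt_coe.2 hp1
            · refine coe_lt_highC _ (hC i) fun c hc hfc => ?_
              exact lt_trans hp1 (lt_of_le_of_lt hv'fx hfc)
    · -- i ≠ m : V.f i x itself is in the target
      have hfx : V.f i x ∈ Io2 (ub i) (vb i) := (hub i hi) ▸ hxB' i hi
      refine ⟨V.f i x, ?_, ?_⟩
      · exact sup_lt_iff.2 ⟨hfx.1, lowC_lt _ (hC i) _⟩
      · exact lt_inf_iff.2 ⟨hfx.2, lt_highC _ (hC i) _⟩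
  choose p hp1 hp2 using hne
  -- bounded subintervals and simultaneous density
  have hioo : ∀ i, ∃ a b : M i, a < p i ∧ p i < b ∧ Set.Ioo a b ⊆ Io2 (W i) (Z i) :=
    fun i => exists_Ioo_subset_Io2 (hp1 i) (hp2 i) (V.no_bot i) (V.no_top i)
  choose a b ha hb hab using hioo
  obtain ⟨x', hx'⟩ := V.sim_dense a b fun i => lt_trans (ha i) (hb i)
  have hx'W : ∀ i, V.f i x' ∈ Io2 (W i) (Z i) :=
    fun i => hab i ⟨(hx' i).1, (hx' i).2⟩
  -- x' is in the original box, hence in E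
  have hx'E : x' ∈ E := by
    refine hsub (Set.mem_iInter.2 fun i => ?_)
    rw [Set.mem_preimage]
    by_cases hi : i = m
    · subst hi
      rw [hm]
      have h2 := Io2_mono (le_sup_left : ub i ≤ W i) (inf_le_left : Z i ≤ vb i) (hx'W i)
      rwa [hubm, hvbm] at h2
    · rw [hub i hi]
      exact Io2_mono le_sup_left inf_le_left (hx'W i)
  -- x and x' have the same relations to all endpoints
  have hrel : ∀ i, ∀ c ∈ V.Cs A i,
      (c < V.f i x ↔ c < V.f i x') ∧ (V.f i x < c ↔ V.f i x' < c) := by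
    intro i
    exact rel_transfer _ (hC i) (hnotC i)
      (Io2_mono le_sup_right inf_le_right (hx'W i))
  exact (V.bic_inv A hn hE x x' hrel).2 hx'E

end VO
namespace VO

/-- `Pw E e X mm u v`: the interval `Io2 u v` around `f mm e` is witnessed relative to the
already-constructed intervals `X l`, `l < mm`. -/
def Pw (V : VO n M0 M) (E : Set M0) (e : M0) (X : ∀ i, Set (M i)) (mm : Fin n)
    (u : WithBot (M mm)) (v : WithTop (M mm)) : Prop :=
  u < (V.f mm e : WithBot (M mm)) ∧ ((V.f mm e : M mm) : WithTop (M mm)) < v ∧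
  ∃ J : ∀ j, Set (M j), (∀ j, mm < j → IsOpenInterval (J j) ∧ V.f j e ∈ J j) ∧
    ((⋂ l, ⋂ _ : l < mm, V.f l ⁻¹' X l) ∩ V.f mm ⁻¹' Io2 u v ∩
      ⋂ j, ⋂ _ : mm < j, V.f j ⁻¹' J j) ⊆ E

lemma Pw_sat (hn : 1 ≤ n) (V : VO n M0 M) (A : Set (M0 ⊕ Sigma M)) (hA : A.Finite)
    {E : Set M0} (hE : V.BIC A E) (e : M0) (X : ∀ i, Set (M i)) (mm : Fin n)
    (hX : ∀ l : Fin n, l < mm → IsOpenInterval (X l))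
    {u : WithBot (M mm)} {v : WithTop (M mm)} (h : V.Pw E e X mm u v) :
    V.Pw E e X mm (satL _ (V.Cs_finite A hA mm) u) (satR _ (V.Cs_finite A hA mm) v) := by
  classical
  obtain ⟨hu, hv, J, hJ, hsub⟩ := h
  refine ⟨lt_of_le_of_lt (satL_le _ _ u) hu, lt_of_lt_of_le hv (le_satR _ _ v), J, hJ, ?_⟩
  set Box : ∀ i, Set (M i) :=
    Function.update (fun i => if i < mm then X i else J i) mm (Io2 u v) with hBoxdef
  have hBoxm : Box mm = Io2 u v := Function.update_self _ _ _
  have hBoxne : ∀ i, i ≠ mm → Box i = if i < mm then X i else J i :=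
    fun i hi => Function.update_of_ne hi _ _
  have hBoxopen : ∀ i, IsOpenInterval (Box i) := by
    intro i
    by_cases hi : i = mm
    · rw [hi, hBoxm]; exact isOpenInterval_Io2 _ _
    · rw [hBoxne i hi]
      by_cases hlt : i < mm
      · simpa [hlt] using hX i hlt
      · have hgt : mm < i := lt_of_le_of_ne (not_lt.1 hlt) (Ne.symm hi)
        simp only [if_neg hlt]
        exact (hJ i hgt).1
  have hBoxsub : (⋂ i, V.f i ⁻¹' Box i) ⊆ E := by
    intro x hx
    simp only [Set.mem_iInter, Set.mem_preimage] at hx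
    refine hsub ⟨⟨?_, ?_⟩, ?_⟩
    · simp only [Set.mem_iInter, Set.mem_preimage]
      intro l hl
      have h' := hx l
      rwa [hBoxne l (ne_of_lt hl), if_pos hl] at h'
    · rw [Set.mem_preimage, ← hBoxm]; exact hx mm
    · simp only [Set.mem_iInter, Set.mem_preimage]
      intro j hj
      have h' := hx j
      rwa [hBoxne j (ne_of_gt hj), if_neg (not_lt.2 (le_of_lt hj))] at h'
  have hkey := V.sat_lemma hn A hA hE mm Box hBoxopen u v hBoxm (V.f mm e) hu hv hBoxsub
  intro x hx
  obtain ⟨⟨hx1, hx2⟩, hx3⟩ := hx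
  simp only [Set.mem_iInter, Set.mem_preimage] at hx1 hx3
  refine hkey ⟨?_, hx2⟩
  simp only [Set.mem_iInter, Set.mem_preimage]
  intro i hi
  rw [hBoxne i hi]
  by_cases hlt : i < mm
  · rw [if_pos hlt]; exact hx1 i hlt
  · rw [if_neg hlt]
    exact hx3 i (lt_of_le_of_ne (not_lt.1 hlt) (Ne.symm hi))

lemma Pw_union (V : VO n M0 M) {E : Set M0} (e : M0) (X : ∀ i, Set (M i)) (mm : Fin n)
    {u1 u2 : WithBot (M mm)} {v1 v2 : WithTop (M mm)}
    (h1 : V.Pw E e X mm u1 v1) (h2 : V.Pw E e X mm u2 v2) :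
    V.Pw E e X mm (u1 ⊓ u2) (v1 ⊔ v2) := by
  obtain ⟨hu1, hv1, J1, hJ1, hsub1⟩ := h1
  obtain ⟨hu2, hv2, J2, hJ2, hsub2⟩ := h2
  refine ⟨lt_of_le_of_lt inf_le_left hu1, lt_of_lt_of_le hv1 le_sup_left,
    fun j => J1 j ∩ J2 j, fun j hj => ⟨isOpenInterval_inter (hJ1 j hj).1 (hJ2 j hj).1,
      (hJ1 j hj).2, (hJ2 j hj).2⟩, ?_⟩
  intro x hx
  obtain ⟨⟨hx1, hx2⟩, hx3⟩ := hx
  simp only [Set.mem_iInter, Set.mem_preimage, Set.mem_inter_iff] at hx3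
  have hcase := Io2_union_subset (⟨hu1, hv1⟩ : V.f mm e ∈ Io2 u1 v1)
    (⟨hu2, hv2⟩ : V.f mm e ∈ Io2 u2 v2) hx2
  rcases hcase with hc | hc
  · refine hsub1 ⟨⟨hx1, hc⟩, ?_⟩
    simp only [Set.mem_iInter, Set.mem_preimage]
    intro j hj; exact (hx3 j hj).1
  · refine hsub2 ⟨⟨hx1, hc⟩, ?_⟩
    simp only [Set.mem_iInter, Set.mem_preimage]
    intro j hj; exact (hx3 j hj).2

end VO
namespace VO

/-- The interval `X l` is a maximal witnessed interval with endpoints among `Cs A l`. -/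
def GoodAt (V : VO n M0 M) (A : Set (M0 ⊕ Sigma M)) (E : Set M0) (e : M0)
    (l : Fin n) (X : ∀ i, Set (M i)) : Prop :=
  (∃ u ∈ insert ⊥ (((↑) : M l → WithBot (M l)) '' V.Cs A l),
    ∃ v ∈ insert ⊤ (((↑) : M l → WithTop (M l)) '' V.Cs A l), X l = Io2 u v) ∧
  V.f l e ∈ X l ∧
  ∀ Y : Set (M l), IsOpenInterval Y → V.f l e ∈ Y →
    (∃ J : ∀ j, Set (M j), (∀ j, l < j → IsOpenInterval (J j) ∧ V.f j e ∈ J j) ∧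
      ((⋂ p, ⋂ _ : p < l, V.f p ⁻¹' X p) ∩ V.f l ⁻¹' Y ∩
        ⋂ j, ⋂ _ : l < j, V.f j ⁻¹' J j) ⊆ E) →
    Y ⊆ X l

/-- The invariant carried along the recursion: the tail beyond `m` is still witnessed. -/
def Witn (V : VO n M0 M) (E : Set M0) (e : M0) (m : ℕ) (X : ∀ i, Set (M i)) : Prop :=
  ∃ J : ∀ j, Set (M j), (∀ j : Fin n, m ≤ (j : ℕ) → IsOpenInterval (J j) ∧ V.f j e ∈ J j) ∧
    ((⋂ l : Fin n, ⋂ _ : (l : ℕ) < m, V.f l ⁻¹' X l) ∩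
      ⋂ j : Fin n, ⋂ _ : m ≤ (j : ℕ), V.f j ⁻¹' J j) ⊆ E

lemma goodAt_congr {V : VO n M0 M} {A : Set (M0 ⊕ Sigma M)} {E : Set M0} {e : M0}
    {l : Fin n} {X X' : ∀ i, Set (M i)}
    (h : ∀ p : Fin n, p ≤ l → X p = X' p) (hg : V.GoodAt A E e l X) :
    V.GoodAt A E e l X' := by
  have hl : X l = X' l := h l (le_refl _)
  have hiI : (⋂ p, ⋂ _ : p < l, V.f p ⁻¹' X p) = (⋂ p, ⋂ _ : p < l, V.f p ⁻¹' X' p) := by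
    refine Set.iInter_congr fun p => ?_
    by_cases hp : p < l
    · simp [hp, h p (le_of_lt hp)]
    · simp [hp]
  obtain ⟨h1, h2, h3⟩ := hg
  refine ⟨hl ▸ h1, hl ▸ h2, fun Y hY hYe hw => hl ▸ h3 Y hY hYe ?_⟩
  rwa [hiI]

lemma step (hn : 1 ≤ n) (V : VO n M0 M) (A : Set (M0 ⊕ Sigma M)) (hA : A.Finite)
    {E : Set M0} (hE : V.BIC A E) (e : M0) (m : ℕ) (hm : m < n) (X : ∀ i, Set (M i))
    (hgood : ∀ l : Fin n, (l : ℕ) < m → V.GoodAt A E e l X)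
    (hw : V.Witn E e m X) :
    ∃ X' : ∀ i, Set (M i), (∀ l : Fin n, (l : ℕ) < m + 1 → V.GoodAt A E e l X') ∧
      V.Witn E e (m + 1) X' := by
  classical
  set mm : Fin n := ⟨m, hm⟩ with hmm
  have hXopen : ∀ l : Fin n, l < mm → IsOpenInterval (X l) := by
    intro l hl
    obtain ⟨u, _, v, _, hX⟩ := (hgood l hl).1
    rw [hX]; exact isOpenInterval_Io2 _ _
  obtain ⟨J0, hJ0, hsub0⟩ := hw
  -- an initial witnessed pair
  have hJ0m := hJ0 mm (le_refl m)
  obtain ⟨u0, v0, hu0⟩ := hJ0m.1.exists_io2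
  have he0 : V.f mm e ∈ Io2 u0 v0 := hu0 ▸ hJ0m.2
  have hP0 : V.Pw E e X mm u0 v0 := by
    refine ⟨he0.1, he0.2, J0, fun j hj => hJ0 j (le_of_lt hj), ?_⟩
    intro x hx
    obtain ⟨⟨hx1, hx2⟩, hx3⟩ := hx
    simp only [Set.mem_iInter, Set.mem_preimage] at hx1 hx3
    refine hsub0 ⟨?_, ?_⟩
    · simp only [Set.mem_iInter, Set.mem_preimage]
      exact fun l hl => hx1 l hl
    · simp only [Set.mem_iInter, Set.mem_preimage]
      intro j hj
      rcases eq_or_lt_of_le hj with heq | hlt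
      · have hjm : j = mm := Fin.ext heq.symm
        subst hjm
        rw [← hu0] at hx2; exact hx2
      · exact hx3 j hlt
  -- the finite family of witnessed pairs with endpoints in `Cs`
  set CB : Set (WithBot (M mm)) :=
    insert ⊥ (((↑) : M mm → WithBot (M mm)) '' V.Cs A mm) with hCB
  set CT : Set (WithTop (M mm)) :=
    insert ⊤ (((↑) : M mm → WithTop (M mm)) '' V.Cs A mm) with hCT
  set T : Set (WithBot (M mm)) := {u | u ∈ CB ∧ ∃ v ∈ CT, V.Pw E e X mm u v} with hT
  set T' : Set (WithTop (M mm)) := {v | v ∈ CT ∧ ∃ u ∈ CB, V.Pw E e X mm u v} with hT'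
  have hCBfin : CB.Finite := (Set.Finite.image _ (V.Cs_finite A hA mm)).insert ⊥
  have hCTfin : CT.Finite := (Set.Finite.image _ (V.Cs_finite A hA mm)).insert ⊤
  have hTfin : T.Finite := hCBfin.subset fun u hu => hu.1
  have hT'fin : T'.Finite := hCTfin.subset fun v hv => hv.1
  have hsat0 := V.Pw_sat hn A hA hE e X mm hXopen hP0
  have hTne : T.Nonempty :=
    ⟨_, satL_mem _ (V.Cs_finite A hA mm) u0, _, satR_mem _ (V.Cs_finite A hA mm) v0, hsat0⟩
  have hT'ne : T'.Nonempty :=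
    ⟨_, satR_mem _ (V.Cs_finite A hA mm) v0, _, satL_mem _ (V.Cs_finite A hA mm) u0, hsat0⟩
  obtain ⟨us, husT, husmin⟩ := Set.exists_min_image T id hTfin hTne
  obtain ⟨vs, hvsT, hvsmax⟩ := Set.exists_max_image T' id hT'fin hT'ne
  obtain ⟨husCB, v1, hv1CT, hP1⟩ := husT
  obtain ⟨hvsCT, u2, hu2CB, hP2⟩ := hvsT
  have hule : us ≤ u2 := husmin u2 ⟨hu2CB, vs, hvsCT, hP2⟩
  have hvle : v1 ≤ vs := hvsmax v1 ⟨hv1CT, us, husCB, hP1⟩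
  have hPs : V.Pw E e X mm us vs := by
    have := V.Pw_union e X mm hP1 hP2
    rwa [inf_eq_left.2 hule, sup_eq_right.2 hvle] at this
  -- the new family of intervals
  set X' : ∀ i, Set (M i) := Function.update X mm (Io2 us vs) with hX'
  have hX'm : X' mm = Io2 us vs := Function.update_self _ _ _
  have hX'ne : ∀ i, i ≠ mm → X' i = X i := fun i hi => Function.update_of_ne hi _ _
  have hiIeq : (⋂ p, ⋂ _ : p < mm, V.f p ⁻¹' X' p) = (⋂ p, ⋂ _ : p < mm, V.f p ⁻¹' X p) := by
    refine Set.iInter_congr fun p => ?_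
    by_cases hp : p < mm
    · simp [hp, hX'ne p (ne_of_lt hp)]
    · simp [hp]
  have hgoodm : V.GoodAt A E e mm X' := by
    refine ⟨⟨us, husCB, vs, hvsCT, hX'm⟩, ?_, ?_⟩
    · rw [hX'm]; exact ⟨hPs.1, hPs.2.1⟩
    · intro Y hY hYe hw'
      obtain ⟨uY, vY, rfl⟩ := hY.exists_io2
      obtain ⟨JY, hJY, hsubY⟩ := hw'
      have hPY : V.Pw E e X mm uY vY := by
        refine ⟨hYe.1, hYe.2, JY, hJY, ?_⟩
        rwa [hiIeq] at hsubY
      have hPsat := V.Pw_sat hn A hA hE e X mm hXopen hPY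
      have h1 : us ≤ satL _ (V.Cs_finite A hA mm) uY :=
        husmin _ ⟨satL_mem _ _ uY, _, satR_mem _ _ vY, hPsat⟩
      have h2 : satR _ (V.Cs_finite A hA mm) vY ≤ vs :=
        hvsmax _ ⟨satR_mem _ _ vY, _, satL_mem _ _ uY, hPsat⟩
      rw [hX'm]
      exact Io2_mono (le_trans h1 (satL_le _ _ uY)) (le_trans (le_satR _ _ vY) h2)
  obtain ⟨hus1, hvs1, Js, hJs, hsubs⟩ := hPs
  refine ⟨X', ?_, Js, fun j hj => hJs j hj, ?_⟩
  · intro l hl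
    rcases Nat.lt_succ_iff_lt_or_eq.1 hl with hlt | heq
    · refine goodAt_congr (fun p hp => ?_) (hgood l hlt)
      exact (hX'ne p (ne_of_lt (lt_of_le_of_lt hp hlt))).symm
    · have : l = mm := Fin.ext heq
      rw [this]; exact hgoodm
  · intro x hx
    obtain ⟨hx1, hx2⟩ := hx
    simp only [Set.mem_iInter, Set.mem_preimage] at hx1 hx2
    refine hsubs ⟨⟨?_, ?_⟩, ?_⟩
    · simp only [Set.mem_iInter, Set.mem_preimage]
      intro l hl
      have h' := hx1 l (Nat.lt_succ_of_lt hl)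
      rwa [hX'ne l (ne_of_lt hl)] at h'
    · have h' := hx1 mm (Nat.lt_succ_self m)
      rw [hX'm] at h'; exact h'
    · simp only [Set.mem_iInter, Set.mem_preimage]
      exact fun j hj => hx2 j hj

end VO
/-- Existence of maximal multi-intervals: if `A` is a finite subset of the
disjoint union of the sorts and `E ⊆ M₀` is a multi-open basic-interval combination presented
over `A`, then every `e ∈ E` has a maximal multi-interval `X(e) = ⋂ i, fᵢ⁻¹(Xⁱ(e))` in `E`
containing it, whose finite endpoints lie in `⟨A⟩ ∩ Mᵢ`. -/
theorem VO.exists_maxMultiInterval {n : ℕ} (hn : 1 ≤ n)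
    {M0 : Type u} {M : Fin n → Type u} [∀ i, LinearOrder (M i)]
    (V : VO n M0 M) (A : Set (M0 ⊕ Sigma M)) (hA : A.Finite)
    (E : Set M0) (hE : V.BIC A E) (hopen : V.MultiOpen E) :
    ∀ e ∈ E, ∃ X : ∀ i, Set (M i), V.IsMaxMultiInterval E e X ∧
      ∀ i, EndpointsIn (X i) {x : M i | V.gen A (Sum.inr ⟨i, x⟩)} := by
  intro e he
  classical
  have key : ∀ m : ℕ, m ≤ n → ∃ X : ∀ i, Set (M i),
      (∀ l : Fin n, (l : ℕ) < m → V.GoodAt A E e l X) ∧ V.Witn E e m X := by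
    intro m
    induction m with
    | zero =>
        intro _
        obtain ⟨S, ⟨I, hI, rfl⟩, heS, hSE⟩ := hopen e he
        refine ⟨fun i => Io2 ⊥ ⊤, fun l hl => absurd hl (Nat.not_lt_zero _), I, ?_, ?_⟩
        · intro j _
          exact ⟨(hI j).1, Set.mem_iInter.1 heS j⟩
        · intro x hx
          refine hSE (Set.mem_iInter.2 fun i => ?_)
          have hx2 := hx.2
          simp only [Set.mem_iInter, Set.mem_preimage] at hx2
          exact hx2 i (Nat.zero_le _)
    | succ m ih =>
        intro hm1
        obtain ⟨X, hgood, hw⟩ := ih (le_of_lt hm1)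
        exact V.step hn A hA hE e m hm1 X hgood hw
  obtain ⟨X, hgood, hw⟩ := key n (le_refl n)
  obtain ⟨J, hJ, hsub⟩ := hw
  have hsub' : (⋂ i, V.f i ⁻¹' X i) ⊆ E := by
    intro x hx
    refine hsub ⟨?_, ?_⟩
    · simp only [Set.mem_iInter, Set.mem_preimage] at hx ⊢
      exact fun l _ => hx l
    · simp only [Set.mem_iInter, Set.mem_preimage]
      intro j hj
      exact absurd hj (not_le.2 j.isLt)
  refine ⟨X, ⟨?_, ?_, hsub', ?_⟩, ?_⟩
  · intro i
    obtain ⟨u, _, v, _, hXi⟩ := (hgood i i.isLt).1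
    rw [hXi]; exact isOpenInterval_Io2 _ _
  · exact fun i => (hgood i i.isLt).2.1
  · exact fun m Y hY hYe hw' => (hgood m m.isLt).2.2 Y hY hYe hw'
  · intro i
    obtain ⟨u, hu, v, hv, hXi⟩ := (hgood i i.isLt).1
    rw [hXi]
    refine endpointsIn_Io2 ?_ ?_
    · rcases hu with rfl | ⟨c, hc, rfl⟩
      · exact Set.mem_insert _ _
      · exact Set.mem_insert_of_mem _ ⟨c, V.Cs_subset_gen A i c hc, rfl⟩
    · rcases hv with rfl | ⟨c, hc, rfl⟩
      · exact Set.mem_insert _ _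
      · exact Set.mem_insert_of_mem _ ⟨c, V.Cs_subset_gen A i c hc, rfl⟩
end

section
/- In a VO_n-structure, if E ⊆ M₀ is a basic-interval combination, then the set E₀ := {x ∈ E : there is no multi-interval I with x ∈ I ⊆ E} is finite. -/
universe u

variable {n : ℕ} {M0 : Type u} {M : Fin n → Type u} [∀ i, LinearOrder (M i)]

lemma isOpenInterval_univ {α : Type*} [LinearOrder α] :
    IsOpenInterval (Set.univ : Set α) := Or.inr (Or.inr (Or.inr rfl))

lemma isOpenInterval_inter_s6 {α : Type*} [LinearOrder α] {I J : Set α}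
    (hI : IsOpenInterval I) (hJ : IsOpenInterval J) : IsOpenInterval (I ∩ J) := by
  obtain ⟨a,b,rfl⟩|⟨a,rfl⟩|⟨b,rfl⟩|rfl := hI <;>
    obtain ⟨c,d,rfl⟩|⟨c,rfl⟩|⟨d,rfl⟩|rfl := hJ
  · exact Or.inl ⟨a ⊔ c, b ⊓ d, by ext x; simp [sup_lt_iff, lt_inf_iff]; tauto⟩
  · exact Or.inl ⟨a ⊔ c, b, by ext x; simp [sup_lt_iff]; tauto⟩
  · exact Or.inl ⟨a, b ⊓ d, by ext x; simp [lt_inf_iff]; tauto⟩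
  · exact Or.inl ⟨a, b, by simp⟩
  · exact Or.inl ⟨a ⊔ c, d, by ext x; simp [sup_lt_iff]; tauto⟩
  · exact Or.inr (Or.inl ⟨a ⊔ c, by ext x; simp [sup_lt_iff]⟩)
  · exact Or.inl ⟨a, d, by ext x; simp⟩
  · exact Or.inr (Or.inl ⟨a, by simp⟩)
  · exact Or.inl ⟨c, b ⊓ d, by ext x; simp [lt_inf_iff]; tauto⟩
  · exact Or.inl ⟨c, b, by ext x; simp; tauto⟩
  · exact Or.inr (Or.inr (Or.inl ⟨b ⊓ d, by ext x; simp [lt_inf_iff]⟩))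
  · exact Or.inr (Or.inr (Or.inl ⟨b, by simp⟩))
  · exact Or.inl ⟨c, d, by simp⟩
  · exact Or.inr (Or.inl ⟨c, by simp⟩)
  · exact Or.inr (Or.inr (Or.inl ⟨d, by simp⟩))
  · exact Or.inr (Or.inr (Or.inr (by simp)))

lemma VO.isMultiInterval_inter (V : VO n M0 M) {S T : Set M0}
    (hS : V.IsMultiInterval S) (hT : V.IsMultiInterval T) {x : M0}
    (hxS : x ∈ S) (hxT : x ∈ T) : V.IsMultiInterval (S ∩ T) := by
  obtain ⟨I, hI, rfl⟩ := hS
  obtain ⟨J, hJ, rfl⟩ := hT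
  refine ⟨fun i => I i ∩ J i, fun i => ⟨isOpenInterval_inter_s6 (hI i).1 (hJ i).1,
    ⟨V.f i x, Set.mem_iInter.1 hxS i, Set.mem_iInter.1 hxT i⟩⟩, ?_⟩
  ext y
  simp only [Set.mem_inter_iff, Set.mem_iInter, Set.mem_preimage, forall_and]

lemma VO.isMultiInterval_univ (V : VO n M0 M) : V.IsMultiInterval (Set.univ : Set M0) :=
  ⟨fun _ => Set.univ, fun j => ⟨isOpenInterval_univ, ⟨V.f j V.zero, trivial⟩⟩, by simp⟩

open Classical in
lemma VO.exists_multi_single (V : VO n M0 M) (i : Fin n) (I : Set (M i))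
    (hI : IsOpenInterval I) (x : M0) (hx : V.f i x ∈ I) :
    ∃ S, V.IsMultiInterval S ∧ x ∈ S ∧ S ⊆ V.f i ⁻¹' I := by
  set K : ∀ j, Set (M j) := Function.update (fun j => (Set.univ : Set (M j))) i I with hK
  refine ⟨⋂ j, V.f j ⁻¹' K j, ⟨K, ?_, rfl⟩, ?_, ?_⟩
  · intro j
    by_cases h : j = i
    · subst h
      rw [hK, Function.update_self]
      exact ⟨hI, ⟨V.f j x, hx⟩⟩
    · rw [hK, Function.update_of_ne h]
      exact ⟨isOpenInterval_univ, ⟨V.f j x, trivial⟩⟩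
  · refine Set.mem_iInter.2 fun j => ?_
    by_cases h : j = i
    · subst h; simpa [hK] using hx
    · simp [hK, Function.update_of_ne h]
  · intro y hy
    have := Set.mem_iInter.1 hy i
    simpa [hK] using this

/-- The set of points of `E` lying in no multi-interval contained in `E`. -/
def VO.iso (V : VO n M0 M) (E : Set M0) : Set M0 :=
  {x ∈ E | ¬ ∃ S : Set M0, V.IsMultiInterval S ∧ x ∈ S ∧ S ⊆ E}

lemma VO.iso_union (V : VO n M0 M) (E F : Set M0) :
    V.iso (E ∪ F) ⊆ V.iso E ∪ V.iso F := by
  rintro x ⟨hx, hni⟩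
  rcases hx with h | h
  · exact Or.inl ⟨h, fun ⟨S, hS, hxS, hSE⟩ =>
      hni ⟨S, hS, hxS, hSE.trans Set.subset_union_left⟩⟩
  · exact Or.inr ⟨h, fun ⟨S, hS, hxS, hSE⟩ =>
      hni ⟨S, hS, hxS, hSE.trans Set.subset_union_right⟩⟩

lemma VO.iso_inter (V : VO n M0 M) (E F : Set M0) :
    V.iso (E ∩ F) ⊆ V.iso E ∪ V.iso F := by
  rintro x ⟨⟨hxE, hxF⟩, hni⟩
  by_contra hc
  simp only [Set.mem_union, not_or] at hc
  have h1 : ∃ S : Set M0, V.IsMultiInterval S ∧ x ∈ S ∧ S ⊆ E := by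
    by_contra h; exact hc.1 ⟨hxE, h⟩
  have h2 : ∃ S : Set M0, V.IsMultiInterval S ∧ x ∈ S ∧ S ⊆ F := by
    by_contra h; exact hc.2 ⟨hxF, h⟩
  obtain ⟨S, hS, hxS, hSE⟩ := h1
  obtain ⟨T, hT, hxT, hTF⟩ := h2
  exact hni ⟨S ∩ T, V.isMultiInterval_inter hS hT hxS hxT, ⟨hxS, hxT⟩,
    Set.inter_subset_inter hSE hTF⟩

lemma VO.key (hn : 1 ≤ n) (V : VO n M0 M) (E : Set M0) (hE : V.BIC Set.univ E) :
    (V.iso E).Finite ∧ (V.iso Eᶜ).Finite := by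
  induction hE with
  | single a ha =>
    constructor
    · exact (Set.finite_singleton a).subset fun x hx => hx.1
    · refine Set.finite_empty.subset ?_
      rintro x ⟨hx, hni⟩
      exfalso
      have hxa : x ≠ a := hx
      set i : Fin n := ⟨0, hn⟩
      have hfa : V.f i x ≠ V.f i a := fun h => hxa (V.f_inj i h)
      rcases hfa.lt_or_gt with h | h
      · obtain ⟨S, hS, hxS, hsub⟩ := V.exists_multi_single i (Set.Iio (V.f i a))
          (Or.inr (Or.inr (Or.inl ⟨_, rfl⟩))) x h
        refine hni ⟨S, hS, hxS, hsub.trans fun y hy => ?_⟩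
        simp only [Set.mem_preimage, Set.mem_Iio] at hy
        simp only [Set.mem_compl_iff, Set.mem_singleton_iff]
        exact fun hya => absurd hy (by rw [hya]; exact lt_irrefl _)
      · obtain ⟨S, hS, hxS, hsub⟩ := V.exists_multi_single i (Set.Ioi (V.f i a))
          (Or.inr (Or.inl ⟨_, rfl⟩)) x h
        refine hni ⟨S, hS, hxS, hsub.trans fun y hy => ?_⟩
        simp only [Set.mem_preimage, Set.mem_Ioi] at hy
        simp only [Set.mem_compl_iff, Set.mem_singleton_iff]
        exact fun hya => absurd hy (by rw [hya]; exact lt_irrefl _)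
  | interval i I hI hend =>
    constructor
    · refine Set.finite_empty.subset ?_
      rintro x ⟨hx, hni⟩
      exact absurd (V.exists_multi_single i I hI x hx) hni
    · obtain ⟨a, b, rfl⟩ | ⟨a, rfl⟩ | ⟨b, rfl⟩ | rfl := hI
      · refine (((Set.finite_singleton b).insert a).preimage (V.f_inj i).injOn).subset ?_
        rintro x ⟨hx, hni⟩
        simp only [Set.mem_compl_iff, Set.mem_preimage, Set.mem_Ioo, not_and] at hx
        simp only [Set.mem_preimage, Set.mem_insert_iff, Set.mem_singleton_iff]
        by_contra hmem
        push_neg at hmem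
        have h3 : V.f i x < a ∨ b < V.f i x := by
          rcases lt_trichotomy (V.f i x) a with h | h | h
          · exact Or.inl h
          · exact absurd h hmem.1
          · rcases lt_trichotomy (V.f i x) b with h' | h' | h'
            · exact absurd h' (hx h)
            · exact absurd h' hmem.2
            · exact Or.inr h'
        rcases h3 with h | h
        · obtain ⟨S, hS, hxS, hsub⟩ := V.exists_multi_single i (Set.Iio a)
            (Or.inr (Or.inr (Or.inl ⟨_, rfl⟩))) x h
          refine hni ⟨S, hS, hxS, hsub.trans fun y hy => ?_⟩
          simp only [Set.mem_preimage, Set.mem_Iio] at hy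
          simp only [Set.mem_compl_iff, Set.mem_preimage, Set.mem_Ioo, not_and]
          exact fun h' => absurd (h'.trans hy) (lt_irrefl a)
        · obtain ⟨S, hS, hxS, hsub⟩ := V.exists_multi_single i (Set.Ioi b)
            (Or.inr (Or.inl ⟨_, rfl⟩)) x h
          refine hni ⟨S, hS, hxS, hsub.trans fun y hy => ?_⟩
          simp only [Set.mem_preimage, Set.mem_Ioi] at hy
          simp only [Set.mem_compl_iff, Set.mem_preimage, Set.mem_Ioo, not_and]
          exact fun _ h' => absurd (hy.trans h') (lt_irrefl b)
      · refine ((Set.finite_singleton a).preimage (V.f_inj i).injOn).subset ?_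
        rintro x ⟨hx, hni⟩
        simp only [Set.mem_compl_iff, Set.mem_preimage, Set.mem_Ioi, not_lt] at hx
        simp only [Set.mem_preimage, Set.mem_singleton_iff]
        by_contra hmem
        have h : V.f i x < a := lt_of_le_of_ne hx hmem
        obtain ⟨S, hS, hxS, hsub⟩ := V.exists_multi_single i (Set.Iio a)
          (Or.inr (Or.inr (Or.inl ⟨_, rfl⟩))) x h
        refine hni ⟨S, hS, hxS, hsub.trans fun y hy => ?_⟩
        simp only [Set.mem_preimage, Set.mem_Iio] at hy
        simp only [Set.mem_compl_iff, Set.mem_preimage, Set.mem_Ioi, not_lt]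
        exact hy.le
      · refine ((Set.finite_singleton b).preimage (V.f_inj i).injOn).subset ?_
        rintro x ⟨hx, hni⟩
        simp only [Set.mem_compl_iff, Set.mem_preimage, Set.mem_Iio, not_lt] at hx
        simp only [Set.mem_preimage, Set.mem_singleton_iff]
        by_contra hmem
        have h : b < V.f i x := lt_of_le_of_ne hx (Ne.symm hmem)
        obtain ⟨S, hS, hxS, hsub⟩ := V.exists_multi_single i (Set.Ioi b)
          (Or.inr (Or.inl ⟨_, rfl⟩)) x h
        refine hni ⟨S, hS, hxS, hsub.trans fun y hy => ?_⟩
        simp only [Set.mem_preimage, Set.mem_Ioi] at hy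
        simp only [Set.mem_compl_iff, Set.mem_preimage, Set.mem_Iio, not_lt]
        exact hy.le
      · refine Set.finite_empty.subset ?_
        rintro x ⟨hx, _⟩
        exact hx trivial
  | empty =>
    constructor
    · exact Set.finite_empty.subset fun x hx => hx.1
    · refine Set.finite_empty.subset ?_
      rintro x ⟨hx, hni⟩
      exact hni ⟨Set.univ, V.isMultiInterval_univ, trivial, fun y _ => Set.notMem_empty y⟩
  | compl E hE ih =>
    exact ⟨ih.2, by rw [compl_compl]; exact ih.1⟩
  | union E F hE hF ihE ihF =>
    refine ⟨(ihE.1.union ihF.1).subset (V.iso_union E F), ?_⟩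
    rw [Set.compl_union]
    exact (ihE.2.union ihF.2).subset (V.iso_inter _ _)

/-- In a `VO n`-structure (`n ≥ 1`), if `E ⊆ M₀` is a basic-interval
combination, then the set of points of `E` lying in no multi-interval contained in `E`
is finite. -/
theorem VO.finite_isolated_part {n : ℕ} (hn : 1 ≤ n)
    {M0 : Type u} {M : Fin n → Type u} [∀ i, LinearOrder (M i)]
    (V : VO n M0 M) (E : Set M0) (hE : V.BIC Set.univ E) :
    {x ∈ E | ¬ ∃ S : Set M0, V.IsMultiInterval S ∧ x ∈ S ∧ S ⊆ E}.Finite :=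
  (V.key hn E hE).1
end
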